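/- arXiv:1707.01951 — 8 statements merged into one kernel-verified Lean document; each statement's English description precedes it below -/
import Mathlib

section
/- Suppose the propensity score is correctly specified in the limit, i.e., π(X) = π_∞(X) almost surely, where π(X) is a version of P(A = 1 | X). Then φ = 1, F₁ = F_Y, F_{2a} = F_{3a}, and consequently F_∞ = F₁ − F_{2a} ∗ G + F_{3a} ∗ G = F_Y. (Theorem 1, first part.) -/
open MeasureTheory ProbabilityTheory Filter Topology Set

/-- Theorem 1, first part: if the propensity score is correctly specified in the limit,
i.e. `π(X) = π_∞(X)` a.s., then `φ = 1`, `F₁ = F_Y`, `F_{2a} = F_{3a}` and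
`F_∞ = F₁ - F_{2a} ∗ G + F_{3a} ∗ G = F_Y`. -/
theorem theorem1_first_part
    {Ω : Type*} [MeasurableSpace Ω] {p : ℕ} (μ : Measure Ω) [IsProbabilityMeasure μ]
    (X : Ω → (Fin p → ℝ)) (A : Ω → ℝ) (Y : Ω → ℝ)
    (hX : Measurable X) (hA : Measurable A) (hY : Measurable Y)
    (hA01 : ∀ ω, A ω = 0 ∨ A ω = 1)
    (hApos : 0 < μ {ω | A ω = 1})
    (pi piInf gInf : (Fin p → ℝ) → ℝ)
    (hpi : Measurable pi) (hpiInf : Measurable piInf) (hgInf : Measurable gInf)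
    (hpiInf01 : ∀ x, piInf x ∈ Set.Ioo (0:ℝ) 1)
    -- π(X) is a version of the conditional probability P(A = 1 | X)
    (hver : μ[A | MeasurableSpace.comap X inferInstance] =ᵐ[μ] fun ω => pi (X ω))
    -- φ = E[π(X)/π_∞(X)]
    (φ : ℝ) (hφ : φ = ∫ ω, pi (X ω) / piInf (X ω) ∂μ)
    (F1 F2a F3a G FY Finf : ℝ → ℝ)
    -- F₁(y) = φ⁻¹ E[(π(X)/π_∞(X)) 1{Y ≤ y}]
    (hF1 : ∀ y, F1 y =
      φ⁻¹ * ∫ ω, (pi (X ω) / piInf (X ω)) * (if Y ω ≤ y then (1:ℝ) else 0) ∂μ)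
    -- F_{2a}(y) = φ⁻¹ E[(π(X)/π_∞(X)) 1{g_∞(X) ≤ y}]
    (hF2a : ∀ y, F2a y =
      φ⁻¹ * ∫ ω, (pi (X ω) / piInf (X ω)) * (if gInf (X ω) ≤ y then (1:ℝ) else 0) ∂μ)
    -- F_{3a}(y) = P(g_∞(X) ≤ y)
    (hF3a : ∀ y, F3a y = (μ {ω | gInf (X ω) ≤ y}).toReal)
    -- G(y) = P(Y - g_∞(X) ≤ y | A = 1)
    (hG : ∀ y, G y = ((μ[|{ω | A ω = 1}]) {ω | Y ω - gInf (X ω) ≤ y}).toReal)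
    -- F_Y(y) = P(Y ≤ y)
    (hFY : ∀ y, FY y = (μ {ω | Y ω ≤ y}).toReal)
    -- F_∞ = F₁ - F_{2a} ∗ G + F_{3a} ∗ G, where (F ∗ G)(y) = ∫ F(y - u) dG(u) and
    -- G is the law of Y - g_∞(X) under the conditional measure given A = 1
    (hFinf : ∀ y, Finf y =
      F1 y - (∫ ω, F2a (y - (Y ω - gInf (X ω))) ∂(μ[|{ω | A ω = 1}]))
           + (∫ ω, F3a (y - (Y ω - gInf (X ω))) ∂(μ[|{ω | A ω = 1}])))
    -- the propensity score is correctly specified in the limit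
    (hcorrect : ∀ᵐ ω ∂μ, pi (X ω) = piInf (X ω)) :
    φ = 1 ∧ (∀ y, F1 y = FY y) ∧ (∀ y, F2a y = F3a y) ∧ (∀ y, Finf y = FY y) := by

  have hone : ∀ᵐ ω ∂μ, pi (X ω) / piInf (X ω) = 1 := by
    filter_upwards [hcorrect] with ω h
    rw [h]
    exact div_self (ne_of_gt (hpiInf01 (X ω)).1)
  have hφ1 : φ = 1 := by
    rw [hφ, integral_congr_ae hone]
    simp
  classical
  have hind : ∀ (s : Set Ω), MeasurableSet s →
      (∫ ω, (pi (X ω) / piInf (X ω)) * (if ω ∈ s then (1:ℝ) else 0) ∂μ)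
        = (μ s).toReal := by
    intro s hs
    have : (∫ ω, (pi (X ω) / piInf (X ω)) * (if ω ∈ s then (1:ℝ) else 0) ∂μ)
        = ∫ ω, s.indicator (fun _ => (1:ℝ)) ω ∂μ := by
      apply integral_congr_ae
      filter_upwards [hone] with ω h
      rw [h, one_mul, Set.indicator_apply]
    rw [this, integral_indicator_const _ hs]
    simp
    rfl
  have hF1Y : ∀ y, F1 y = FY y := by
    intro y
    have hs : MeasurableSet {ω | Y ω ≤ y} := hY measurableSet_Iic
    have := hind {ω | Y ω ≤ y} hs
    simp only [Set.mem_setOf_eq] at this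
    rw [hF1 y, hφ1, inv_one, one_mul, this, hFY]
  have hF23 : ∀ y, F2a y = F3a y := by
    intro y
    have hs : MeasurableSet {ω | gInf (X ω) ≤ y} := (hgInf.comp hX) measurableSet_Iic
    have := hind {ω | gInf (X ω) ≤ y} hs
    simp only [Set.mem_setOf_eq] at this
    rw [hF2a y, hφ1, inv_one, one_mul, this, hF3a]
  refine ⟨hφ1, hF1Y, hF23, fun y => ?_⟩
  rw [hFinf y]
  have : (∫ ω, F2a (y - (Y ω - gInf (X ω))) ∂(μ[|{ω | A ω = 1}]))
      = ∫ ω, F3a (y - (Y ω - gInf (X ω))) ∂(μ[|{ω | A ω = 1}]) := by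
    congr 1
    ext ω
    exact hF23 _
  rw [this, sub_add_cancel]
  exact hF1Y y
end

section
/- Suppose the outcome regression model is correctly specified in the limit: Y = g(X) + u with the error u independent of (A, X), and g(X) = g_∞(X) almost surely. Then F₁ = F_{2a} ∗ G, F_Y = F_{3a} ∗ G, and consequently F_∞ = F₁ − F_{2a} ∗ G + F_{3a} ∗ G = F_Y. (Theorem 1, second part.) -/
open MeasureTheory ProbabilityTheory Filter Topology Set

/-- Theorem 1, second part: if the outcome regression model is correctly specified in the
limit, i.e. `Y = g(X) + u` with `u` independent of `(A, X)` and `g(X) = g_∞(X)` a.s., then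
`F₁ = F_{2a} ∗ G`, `F_Y = F_{3a} ∗ G` and `F_∞ = F₁ - F_{2a} ∗ G + F_{3a} ∗ G = F_Y`. -/
theorem theorem1_second_part
    {Ω : Type*} [MeasurableSpace Ω] {p : ℕ} (μ : Measure Ω) [IsProbabilityMeasure μ]
    (X : Ω → (Fin p → ℝ)) (A : Ω → ℝ) (Y : Ω → ℝ) (u : Ω → ℝ)
    (hX : Measurable X) (hA : Measurable A) (hY : Measurable Y)
    (hA01 : ∀ ω, A ω = 0 ∨ A ω = 1)
    (hApos : 0 < μ {ω | A ω = 1})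
    (g pi piInf gInf : (Fin p → ℝ) → ℝ)
    (hg : Measurable g) (hpi : Measurable pi) (hpiInf : Measurable piInf)
    (hgInf : Measurable gInf)
    (hpiInf01 : ∀ x, piInf x ∈ Set.Ioo (0:ℝ) 1)
    -- π(X) is a version of the conditional probability P(A = 1 | X)
    (hver : μ[A | MeasurableSpace.comap X inferInstance] =ᵐ[μ] fun ω => pi (X ω))
    -- the regression model: Y = g(X) + u with u independent of (A, X)
    (hmodel : ∀ ω, Y ω = g (X ω) + u ω)
    (hindep : IndepFun (fun ω => (A ω, X ω)) u μ)
    -- the ratio π(X)/π_∞(X) is integrable, so that φ and F₁, F_{2a} are well defined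
    (hint : Integrable (fun ω => pi (X ω) / piInf (X ω)) μ)
    -- φ = E[π(X)/π_∞(X)]
    (φ : ℝ) (hφ : φ = ∫ ω, pi (X ω) / piInf (X ω) ∂μ)
    (F1 F2a F3a G FY Finf : ℝ → ℝ)
    -- F₁(y) = φ⁻¹ E[(π(X)/π_∞(X)) 1{Y ≤ y}]
    (hF1 : ∀ y, F1 y =
      φ⁻¹ * ∫ ω, (pi (X ω) / piInf (X ω)) * (if Y ω ≤ y then (1:ℝ) else 0) ∂μ)
    -- F_{2a}(y) = φ⁻¹ E[(π(X)/π_∞(X)) 1{g_∞(X) ≤ y}]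
    (hF2a : ∀ y, F2a y =
      φ⁻¹ * ∫ ω, (pi (X ω) / piInf (X ω)) * (if gInf (X ω) ≤ y then (1:ℝ) else 0) ∂μ)
    -- F_{3a}(y) = P(g_∞(X) ≤ y)
    (hF3a : ∀ y, F3a y = (μ {ω | gInf (X ω) ≤ y}).toReal)
    -- G(y) = P(Y - g_∞(X) ≤ y | A = 1)
    (hG : ∀ y, G y = ((μ[|{ω | A ω = 1}]) {ω | Y ω - gInf (X ω) ≤ y}).toReal)
    -- F_Y(y) = P(Y ≤ y)
    (hFY : ∀ y, FY y = (μ {ω | Y ω ≤ y}).toReal)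
    -- F_∞ = F₁ - F_{2a} ∗ G + F_{3a} ∗ G, where (F ∗ G)(y) = ∫ F(y - u) dG(u) and
    -- G is the law of Y - g_∞(X) under the conditional measure given A = 1
    (hFinf : ∀ y, Finf y =
      F1 y - (∫ ω, F2a (y - (Y ω - gInf (X ω))) ∂(μ[|{ω | A ω = 1}]))
           + (∫ ω, F3a (y - (Y ω - gInf (X ω))) ∂(μ[|{ω | A ω = 1}])))
    -- the regression function is correctly specified in the limit
    (hcorrect : ∀ᵐ ω ∂μ, g (X ω) = gInf (X ω)) :
    (∀ y, F1 y = ∫ ω, F2a (y - (Y ω - gInf (X ω))) ∂(μ[|{ω | A ω = 1}])) ∧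
    (∀ y, FY y = ∫ ω, F3a (y - (Y ω - gInf (X ω))) ∂(μ[|{ω | A ω = 1}])) ∧
    (∀ y, Finf y = FY y) := by
  -- the general convolution identity, proved once for an arbitrary weight `w`
  have hu : Measurable u := by
    have : u = fun ω => Y ω - g (X ω) := funext fun ω => by rw [hmodel ω]; ring
    rw [this]; exact hY.sub (hg.comp hX)
  have hA1 : MeasurableSet {ω | A ω = 1} := hA (measurableSet_singleton 1)
  have hAne : μ {ω | A ω = 1} ≠ 0 := hApos.ne'
  have hAfin : μ {ω | A ω = 1} ≠ ⊤ := measure_ne_top μ _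
  have hsub : ∀ᵐ ω ∂μ, Y ω - gInf (X ω) = u ω :=
    hcorrect.mono fun ω h => by rw [hmodel ω, h]; ring
  have hAu : IndepFun A u μ := hindep.comp measurable_fst measurable_id
  have hmapu : (μ[|{ω | A ω = 1}]).map u = μ.map u := by
    ext s hs
    rw [Measure.map_apply hu hs, Measure.map_apply hu hs, cond_apply hA1]
    have h1 : {ω | A ω = 1} = A ⁻¹' {1} := rfl
    rw [h1, (indepFun_iff_measure_inter_preimage_eq_mul.mp hAu) {1} s
      (measurableSet_singleton 1) hs, ← mul_assoc, ENNReal.inv_mul_cancel, one_mul]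
    · rwa [← h1]
    · rwa [← h1]
  have hXu : IndepFun X u μ := hindep.comp measurable_snd measurable_id
  have hprod : μ.map (fun ω => (X ω, u ω)) = (μ.map X).prod (μ.map u) :=
    (indepFun_iff_map_prod_eq_prod_map_map hX.aemeasurable hu.aemeasurable).mp hXu
  have hPX : IsProbabilityMeasure (μ.map X) := Measure.isProbabilityMeasure_map hX.aemeasurable
  have hPu : IsProbabilityMeasure (μ.map u) := Measure.isProbabilityMeasure_map hu.aemeasurable
  have key : ∀ (w : (Fin p → ℝ) → ℝ), Measurable w → Integrable (fun ω => w (X ω)) μ →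
      ∀ y : ℝ,
      ∫ ω, w (X ω) * (if Y ω ≤ y then (1:ℝ) else 0) ∂μ
        = ∫ ω, (∫ ω', w (X ω') * (if gInf (X ω') ≤ y - (Y ω - gInf (X ω)) then (1:ℝ) else 0) ∂μ)
            ∂(μ[|{ω | A ω = 1}]) := by
    intro w hw hwint y
    set f : (Fin p → ℝ) × ℝ → ℝ :=
      fun z => w z.1 * (if gInf z.1 ≤ y - z.2 then (1:ℝ) else 0) with hf_def
    have hfmeas : Measurable f := by
      apply (hw.comp measurable_fst).mul
      exact Measurable.ite (measurableSet_le (hgInf.comp measurable_fst)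
        (measurable_const.sub measurable_snd)) measurable_const measurable_const
    set H : ℝ → ℝ :=
      fun t => ∫ ω', w (X ω') * (if gInf (X ω') ≤ y - t then (1:ℝ) else 0) ∂μ with hH_def
    have hHsm : StronglyMeasurable H := by
      have hFm : Measurable (fun z : ℝ × Ω =>
          w (X z.2) * (if gInf (X z.2) ≤ y - z.1 then (1:ℝ) else 0)) := by
        apply (hw.comp (hX.comp measurable_snd)).mul
        exact Measurable.ite (measurableSet_le (hgInf.comp (hX.comp measurable_snd))
          (measurable_const.sub measurable_fst)) measurable_const measurable_const
      exact hFm.stronglyMeasurable.integral_prod_right'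
    have hwX : Integrable w (μ.map X) :=
      (integrable_map_measure hw.aestronglyMeasurable hX.aemeasurable).mpr hwint
    have hfint : Integrable f ((μ.map X).prod (μ.map u)) := by
      apply Integrable.mono' (g := fun z => ‖w z.1‖ * 1)
        (hwX.norm.mul_prod (integrable_const (1:ℝ))) hfmeas.aestronglyMeasurable
      refine Eventually.of_forall fun z => ?_
      rw [hf_def]
      simp only [norm_mul, mul_one]
      have : ‖(if gInf z.1 ≤ y - z.2 then (1:ℝ) else 0)‖ ≤ 1 := by
        split <;> simp
      calc ‖w z.1‖ * ‖(if gInf z.1 ≤ y - z.2 then (1:ℝ) else 0)‖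
          ≤ ‖w z.1‖ * 1 := mul_le_mul_of_nonneg_left this (norm_nonneg _)
        _ = ‖w z.1‖ := mul_one _
    calc ∫ ω, w (X ω) * (if Y ω ≤ y then (1:ℝ) else 0) ∂μ
        = ∫ ω, f (X ω, u ω) ∂μ := by
          refine integral_congr_ae (hcorrect.mono fun ω h => ?_)
          rw [hf_def]
          simp only
          congr 1
          refine if_congr ?_ rfl rfl
          rw [hmodel ω, h]
          constructor <;> intro h2 <;> linarith
      _ = ∫ z, f z ∂(μ.map (fun ω => (X ω, u ω))) :=
          (integral_map (hX.prodMk hu).aemeasurable hfmeas.aestronglyMeasurable).symm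
      _ = ∫ z, f z ∂((μ.map X).prod (μ.map u)) := by rw [hprod]
      _ = ∫ x, ∫ t, f (x, t) ∂(μ.map u) ∂(μ.map X) := integral_prod f hfint
      _ = ∫ t, ∫ x, f (x, t) ∂(μ.map X) ∂(μ.map u) := integral_integral_swap hfint
      _ = ∫ t, H t ∂(μ.map u) := by
          refine integral_congr_ae (Eventually.of_forall fun t => ?_)
          rw [hH_def]
          exact integral_map hX.aemeasurable
            ((hfmeas.comp (measurable_id.prodMk measurable_const)).aestronglyMeasurable)
      _ = ∫ t, H t ∂((μ[|{ω | A ω = 1}]).map u) := by rw [hmapu]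
      _ = ∫ ω, H (u ω) ∂(μ[|{ω | A ω = 1}]) :=
          integral_map hu.aemeasurable hHsm.aestronglyMeasurable
      _ = ∫ ω, H (Y ω - gInf (X ω)) ∂(μ[|{ω | A ω = 1}]) := by
          refine integral_congr_ae ((cond_absolutelyContinuous.ae_eq hsub).mono fun ω h => ?_)
          dsimp only at h ⊢
          rw [← h]
      _ = _ := rfl
  -- indicator integrals compute probabilities
  have ind : ∀ (h : Ω → ℝ), Measurable h → ∀ (c : ℝ),
      ∫ ω, (1:ℝ) * (if h ω ≤ c then (1:ℝ) else 0) ∂μ = (μ {ω | h ω ≤ c}).toReal := by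
    intro h hm c
    rw [show (μ {ω | h ω ≤ c}).toReal = μ.real {ω | h ω ≤ c} from rfl,
      ← integral_indicator_one (measurableSet_le hm measurable_const)]
    refine integral_congr_ae (Eventually.of_forall fun ω => ?_)
    by_cases hc : h ω ≤ c <;> simp [hc, Set.indicator_apply]
  -- part 1
  have h1 : ∀ y, F1 y = ∫ ω, F2a (y - (Y ω - gInf (X ω))) ∂(μ[|{ω | A ω = 1}]) := by
    intro y
    rw [hF1 y, key (fun x => pi x / piInf x) (hpi.div hpiInf) hint y, ← integral_const_mul]
    refine integral_congr_ae (Eventually.of_forall fun ω => ?_)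
    dsimp only
    rw [hF2a (y - (Y ω - gInf (X ω)))]
  -- part 2
  have h2 : ∀ y, FY y = ∫ ω, F3a (y - (Y ω - gInf (X ω))) ∂(μ[|{ω | A ω = 1}]) := by
    intro y
    have hkey := key (fun _ => (1:ℝ)) measurable_const (integrable_const 1) y
    rw [hFY y, ← ind Y hY y, hkey]
    refine integral_congr_ae (Eventually.of_forall fun ω => ?_)
    dsimp only
    rw [hF3a (y - (Y ω - gInf (X ω))),
      ← ind (fun ω' => gInf (X ω')) (hgInf.comp hX) (y - (Y ω - gInf (X ω)))]
  refine ⟨h1, h2, fun y => ?_⟩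
  rw [hFinf y, h1 y, h2 y]
  ring
end

section
/- Under assumptions A1 and A2, the normalizing constant satisfies C_n/n = (1/n) Σ_{i=1}^n A_i/π̂_n(X_i) → E[π(X)/π_∞(X)] = φ almost surely as n → ∞. -/
open MeasureTheory ProbabilityTheory Filter Topology Set

/-- The (topological) support of a measure: the set of points all of whose
neighborhoods have positive measure. -/
def msupport {E : Type*} [TopologicalSpace E] [MeasurableSpace E] (ν : Measure E) : Set E :=
  {x | ∀ U ∈ nhds x, 0 < ν U}

lemma msupport_compl_isOpen_and_null {E : Type*} [TopologicalSpace E] [MeasurableSpace E]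
    [SecondCountableTopology E] (ν : Measure E) :
    IsOpen (msupport ν)ᶜ ∧ ν (msupport ν)ᶜ = 0 := by
  have hset : (msupport ν)ᶜ = ⋃₀ {V : Set E | IsOpen V ∧ ν V = 0} := by
    ext x
    simp only [mem_compl_iff, msupport, mem_setOf_eq, mem_sUnion]
    constructor
    · intro h
      push_neg at h
      obtain ⟨U, hU, hνU⟩ := h
      rw [le_zero_iff] at hνU
      obtain ⟨V, hVU, hVopen, hxV⟩ := mem_nhds_iff.mp hU
      exact ⟨V, ⟨hVopen, le_antisymm ((measure_mono hVU).trans hνU.le) (by simp)⟩, hxV⟩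
    · rintro ⟨V, ⟨hVo, hV0⟩, hxV⟩
      push_neg
      exact ⟨V, hVo.mem_nhds hxV, by simp [hV0]⟩
  obtain ⟨T, hTc, hTsub, hTeq⟩ :=
    TopologicalSpace.isOpen_sUnion_countable {V : Set E | IsOpen V ∧ ν V = 0}
      (fun V hV => hV.1)
  constructor
  · rw [hset]; exact isOpen_sUnion fun V hV => hV.1
  · rw [hset, ← hTeq]
    exact (measure_sUnion_null_iff hTc).mpr fun t ht => (hTsub ht).2

/-- Under A1 and A2, the normalizing constants satisfy
`C_n / n = (1/n) Σ_{i<n} A_i/π̂_n(X_i) → E[π(X)/π_∞(X)] = φ` almost surely. -/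
theorem Cn_over_n_tendsto_phi
    {Ω : Type*} [MeasurableSpace Ω] {p : ℕ} (μ : Measure Ω) [IsProbabilityMeasure μ]
    (X : ℕ → Ω → (Fin p → ℝ)) (A : ℕ → Ω → ℝ) (Y : ℕ → Ω → ℝ)
    (hmeas : ∀ i, Measurable (fun ω => (X i ω, A i ω, Y i ω)))
    -- (X_i, A_i, Y_i), i ≥ 0, are i.i.d. copies of (X, A, Y) = (X_0, A_0, Y_0)
    (hindep : iIndepFun (fun i ω => (X i ω, A i ω, Y i ω)) μ)
    (hident : ∀ i, IdentDistrib (fun ω => (X i ω, A i ω, Y i ω))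
      (fun ω => (X 0 ω, A 0 ω, Y 0 ω)) μ μ)
    (hA01 : ∀ i ω, A i ω = 0 ∨ A i ω = 1)
    (pi piInf : (Fin p → ℝ) → ℝ)
    (hpi : Measurable pi) (hpiInf : Measurable piInf)
    (hpiInf01 : ∀ x, piInf x ∈ Set.Ioo (0:ℝ) 1)
    -- π(X) is a version of the conditional probability P(A = 1 | X)
    (hver : μ[A 0 | MeasurableSpace.comap (X 0) inferInstance] =ᵐ[μ] fun ω => pi (X 0 ω))
    -- the sequence of random functions π̂_n, with values in (0,1), measurable in (ω, x)
    (piHat : ℕ → Ω → (Fin p → ℝ) → ℝ)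
    (hpiHatMeas : ∀ n, Measurable (fun q : Ω × (Fin p → ℝ) => piHat n q.1 q.2))
    (hpiHat01 : ∀ n ω x, piHat n ω x ∈ Set.Ioo (0:ℝ) 1)
    -- Assumption A1: sup_{x ∈ S_X} |π̂_n(x) - π_∞(x)| → 0 a.s.
    (hA1 : ∀ᵐ ω ∂μ, TendstoUniformlyOn (fun n x => piHat n ω x) piInf atTop
      (msupport (μ.map (X 0))))
    -- Assumption A2: inf_{x ∈ S_X} π_∞(x) = i_∞ > 0
    (hA2 : ∃ iInf : ℝ, 0 < iInf ∧ ∀ x ∈ msupport (μ.map (X 0)), iInf ≤ piInf x)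
    -- C_n = Σ_{i<n} A_i / π̂_n(X_i)
    (C : ℕ → Ω → ℝ)
    (hC : ∀ n ω, C n ω = ∑ i ∈ Finset.range n, A i ω / piHat n ω (X i ω))
    -- φ = E[π(X)/π_∞(X)]
    (φ : ℝ) (hφ : φ = ∫ ω, pi (X 0 ω) / piInf (X 0 ω) ∂μ) :
    ∀ᵐ ω ∂μ, Tendsto (fun n => C n ω / n) atTop (nhds φ) := by
  classical
  obtain ⟨iInf, hiInf, hiInfle⟩ := hA2
  -- basic measurability
  have hX : ∀ i, Measurable (X i) := fun i => (hmeas i).fst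
  have hA : ∀ i, Measurable (A i) := fun i => (hmeas i).snd.fst
  have hA0 : ∀ i ω, 0 ≤ A i ω := by
    intro i ω; rcases hA01 i ω with h | h <;> simp [h]
  have hA1' : ∀ i ω, A i ω ≤ 1 := by
    intro i ω; rcases hA01 i ω with h | h <;> simp [h]
  -- the support set
  set S : Set (Fin p → ℝ) := msupport (μ.map (X 0)) with hS
  obtain ⟨hSopenc, hSnull⟩ := msupport_compl_isOpen_and_null (μ.map (X 0))
  have hSmeas : MeasurableSet S := by
    have := hSopenc.measurableSet.compl
    rwa [compl_compl] at this
  -- almost surely all X i lie in the support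
  have hXident : ∀ i, IdentDistrib (X i) (X 0) μ μ := fun i => (hident i).comp measurable_fst
  have hXS : ∀ i, ∀ᵐ ω ∂μ, X i ω ∈ S := by
    intro i
    have hmap : μ.map (X i) = μ.map (X 0) := (hXident i).map_eq
    have : μ (X i ⁻¹' Sᶜ) = 0 := by
      rw [← Measure.map_apply (hX i) hSmeas.compl, hmap]
      exact hSnull
    filter_upwards [measure_eq_zero_iff_ae_notMem.mp this] with ω hω
    simpa using hω
  have hXSall : ∀ᵐ ω ∂μ, ∀ i, X i ω ∈ S := ae_all_iff.mpr hXS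
  -- the i.i.d. sequence Z i = A i / piInf (X i)
  set Z : ℕ → Ω → ℝ := fun i ω => A i ω / piInf (X i ω) with hZ
  have hg : Measurable (fun q : (Fin p → ℝ) × ℝ × ℝ => q.2.1 / piInf q.1) :=
    (measurable_snd.fst).div (hpiInf.comp measurable_fst)
  have hZindep : Pairwise (Function.onFun (IndepFun · · μ) Z) := by
    intro i j hij
    exact (hindep.comp (fun _ => fun q : (Fin p → ℝ) × ℝ × ℝ => q.2.1 / piInf q.1)
      (fun _ => hg)).indepFun hij
  have hZident : ∀ i, IdentDistrib (Z i) (Z 0) μ μ := fun i => (hident i).comp hg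
  have hZmeas : ∀ i, Measurable (Z i) := fun i => (hA i).div (hpiInf.comp (hX i))
  have hZint : Integrable (Z 0) μ := by
    refine Integrable.mono' (integrable_const (1 / iInf)) (hZmeas 0).aestronglyMeasurable ?_
    filter_upwards [hXS 0] with ω hω
    have hb : iInf ≤ piInf (X 0 ω) := hiInfle _ hω
    rw [Real.norm_eq_abs, abs_div, abs_of_nonneg (hA0 0 ω),
      abs_of_pos (hpiInf01 (X 0 ω)).1]
    exact div_le_div₀ zero_le_one (hA1' 0 ω) hiInf hb
  -- strong law of large numbers
  have hSLLN := strong_law_ae_real Z hZint hZindep hZident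
  -- identify the limit with φ
  have hmle : MeasurableSpace.comap (X 0) inferInstance ≤ ‹MeasurableSpace Ω› :=
    (hX 0).comap_le
  have hlim : (∫ ω, Z 0 ω ∂μ) = φ := by
    set m : MeasurableSpace Ω := MeasurableSpace.comap (X 0) inferInstance with hm
    set f : Ω → ℝ := fun ω => (piInf (X 0 ω))⁻¹ with hf
    have hfSM : StronglyMeasurable[m] f :=
      ((hpiInf.inv).comp (comap_measurable (X 0))).stronglyMeasurable
    have hA0int : Integrable (A 0) μ := by
      refine Integrable.mono' (integrable_const 1) (hA 0).aestronglyMeasurable ?_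
      filter_upwards with ω
      rw [Real.norm_eq_abs, abs_of_nonneg (hA0 0 ω)]
      exact hA1' 0 ω
    have hfA : f * A 0 = Z 0 := by
      funext ω
      simp only [Pi.mul_apply, hf, hZ]
      rw [inv_mul_eq_div]
    have hfAint : Integrable (f * A 0) μ := by rw [hfA]; exact hZint
    have h1 : (∫ ω, Z 0 ω ∂μ) = ∫ ω, (f * A 0) ω ∂μ := by rw [hfA]
    have h2 : (∫ ω, (f * A 0) ω ∂μ) = ∫ ω, (μ[f * A 0 | m]) ω ∂μ :=
      (integral_condExp hmle (f := f * A 0)).symm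
    have h3 : (∫ ω, (μ[f * A 0 | m]) ω ∂μ) = ∫ ω, (f * μ[A 0 | m]) ω ∂μ :=
      integral_congr_ae (condExp_mul_of_stronglyMeasurable_left hfSM hfAint hA0int)
    have h4 : (∫ ω, (f * μ[A 0 | m]) ω ∂μ) = ∫ ω, f ω * pi (X 0 ω) ∂μ := by
      refine integral_congr_ae ?_
      filter_upwards [hver] with ω hω
      simp only [Pi.mul_apply, hω]
    have h5 : (∫ ω, f ω * pi (X 0 ω) ∂μ) = φ := by
      rw [hφ]
      congr 1
      funext ω
      rw [hf, inv_mul_eq_div]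
    rw [h1, h2, h3, h4, h5]
  rw [hlim] at hSLLN
  -- conclusion
  filter_upwards [hSLLN, hA1, hXSall] with ω h1 h2 h3
  rw [Metric.tendsto_atTop] at h1 ⊢
  intro ε hε
  obtain ⟨N1, hN1⟩ := h1 (ε / 2) (by linarith)
  set δ : ℝ := min (iInf / 2) (iInf / 2 * iInf * (ε / 2)) with hδdef
  have hδpos : 0 < δ := lt_min (by linarith) (by positivity)
  obtain ⟨N2, hN2⟩ := eventually_atTop.mp
    (Metric.tendstoUniformlyOn_iff.mp h2 δ hδpos)
  refine ⟨max (max N1 N2) 1, fun n hn => ?_⟩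
  have hnN1 : N1 ≤ n := le_trans (le_trans (le_max_left _ _) (le_max_left _ _)) hn
  have hnN2 : N2 ≤ n := le_trans (le_trans (le_max_right _ _) (le_max_left _ _)) hn
  have hn1 : 1 ≤ n := le_trans (le_max_right _ _) hn
  have hnpos : (0:ℝ) < n := by exact_mod_cast hn1
  -- per-term bound
  have key : ∀ i ∈ Finset.range n,
      |A i ω / piHat n ω (X i ω) - A i ω / piInf (X i ω)| ≤ ε / 2 := by
    intro i _
    rcases hA01 i ω with h | h
    · simp [h]; linarith
    rw [h]
    set a : ℝ := piHat n ω (X i ω) with ha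
    set b : ℝ := piInf (X i ω) with hb
    have hxS : X i ω ∈ S := h3 i
    have hbge : iInf ≤ b := hiInfle _ hxS
    have hdist : dist b a < δ := hN2 n hnN2 (X i ω) hxS
    have habs : |b - a| ≤ δ := le_of_lt (by rwa [Real.dist_eq] at hdist)
    have hδ1 : δ ≤ iInf / 2 := min_le_left _ _
    have hδ2 : δ ≤ iInf / 2 * iInf * (ε / 2) := min_le_right _ _
    have hage : iInf / 2 ≤ a := by
      have := abs_le.mp habs
      linarith [this.1, this.2]
    have hapos : 0 < a := lt_of_lt_of_le (by linarith) hage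
    have hbpos : 0 < b := lt_of_lt_of_le hiInf hbge
    have heq : 1 / a - 1 / b = (b - a) / (a * b) := by
      field_simp
    rw [heq, abs_div, abs_of_pos (mul_pos hapos hbpos)]
    have hdenom : iInf / 2 * iInf ≤ a * b :=
      mul_le_mul hage hbge hiInf.le hapos.le
    calc |b - a| / (a * b) ≤ δ / (iInf / 2 * iInf) :=
          div_le_div₀ (le_of_lt hδpos) habs (by positivity) hdenom
      _ ≤ ε / 2 := by
          rw [div_le_iff₀ (by positivity)]
          linarith [hδ2]
  -- bound on the distance between C n / n and the LLN average
  have hsumZ : dist (C n ω / n) ((∑ i ∈ Finset.range n, Z i ω) / n) ≤ ε / 2 := by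
    rw [Real.dist_eq, div_sub_div_same, hC, ← Finset.sum_sub_distrib, abs_div,
      abs_of_pos hnpos, div_le_iff₀ hnpos]
    calc |∑ i ∈ Finset.range n, (A i ω / piHat n ω (X i ω) - A i ω / piInf (X i ω))|
        ≤ ∑ i ∈ Finset.range n, |A i ω / piHat n ω (X i ω) - A i ω / piInf (X i ω)| :=
          Finset.abs_sum_le_sum_abs _ _
      _ ≤ ∑ _i ∈ Finset.range n, (ε / 2) := Finset.sum_le_sum key
      _ = n * (ε / 2) := by simp [Finset.sum_const, mul_comm]
      _ = ε / 2 * n := by ring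
  have hZdist : dist ((∑ i ∈ Finset.range n, Z i ω) / n) φ < ε / 2 := hN1 n hnN1
  calc dist (C n ω / n) φ
      ≤ dist (C n ω / n) ((∑ i ∈ Finset.range n, Z i ω) / n)
        + dist ((∑ i ∈ Finset.range n, Z i ω) / n) φ := dist_triangle _ _ _
    _ < ε := by linarith
end

section
/- Weighted Glivenko–Cantelli property: if (X_i, A_i, Y_i), i ≥ 1, are i.i.d. copies of (X, A, Y) and π_∞: ℝ^p → (0,1) is a measurable function with π_∞(X) ≥ i_∞ > 0 almost surely, then sup_y | (1/n) Σ_{i=1}^n A_i 1{Y_i ≤ y}/π_∞(X_i) − E[ A 1{Y ≤ y}/π_∞(X) ] | → 0 almost surely as n → ∞. -/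
open MeasureTheory ProbabilityTheory Filter Topology Set

private lemma gc_bound (F G Fn Gn : ℝ → ℝ) (L Hn ε' : ℝ) (hε' : 0 < ε') (k : ℕ) (t : ℕ → ℝ)
    (hkL : L ≤ k * ε')
    (hk2 : ε' < L → ((k : ℝ) - 1) * ε' < L)
    (hFmono : Monotone F) (hF0 : ∀ y, 0 ≤ F y) (hFL : ∀ y, F y ≤ L)
    (hFG : ∀ z y : ℝ, z < y → F z ≤ G y)
    (hP1 : ∀ j : ℕ, 1 ≤ j → (j : ℝ) * ε' < L → G (t j) ≤ (j : ℝ) * ε')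
    (hP2 : ∀ j : ℕ, 1 ≤ j → (j : ℝ) * ε' < L → (j : ℝ) * ε' ≤ F (t j))
    (hFnmono : Monotone Fn) (hFn0 : ∀ y, 0 ≤ Fn y) (hFnH : ∀ y, Fn y ≤ Hn)
    (hFnGn : ∀ z y : ℝ, z < y → Fn z ≤ Gn y)
    (y : ℝ) :
    |Fn y - F y| ≤ (|Hn - L| + ∑ j ∈ Finset.range (k + 1),
      (|Fn (t j) - F (t j)| + |Gn (t j) - G (t j)|)) + ε' := by
  classical
  set S : ℝ := ∑ j ∈ Finset.range (k + 1), (|Fn (t j) - F (t j)| + |Gn (t j) - G (t j)|)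
    with hSdef
  have hS0 : 0 ≤ S := Finset.sum_nonneg fun j _ => by positivity
  set δ : ℝ := |Hn - L| + S with hδdef
  have hδ0 : 0 ≤ δ := add_nonneg (abs_nonneg _) hS0
  have hHδ : |Hn - L| ≤ δ := le_add_of_le_of_nonneg le_rfl hS0
  have hterm : ∀ j : ℕ, j ≤ k →
      |Fn (t j) - F (t j)| ≤ δ ∧ |Gn (t j) - G (t j)| ≤ δ := by
    intro j hj
    have hmem : j ∈ Finset.range (k + 1) := Finset.mem_range.2 (Nat.lt_succ_of_le hj)
    have hle : |Fn (t j) - F (t j)| + |Gn (t j) - G (t j)| ≤ S :=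
      Finset.single_le_sum (f := fun j => |Fn (t j) - F (t j)| + |Gn (t j) - G (t j)|)
        (fun i _ => by positivity) hmem
    constructor
    · have := abs_nonneg (Gn (t j) - G (t j)); rw [hδdef]
      have := abs_nonneg (Hn - L); linarith
    · have := abs_nonneg (Fn (t j) - F (t j)); rw [hδdef]
      have := abs_nonneg (Hn - L); linarith
  have hHn : Hn ≤ L + δ := by
    have : Hn - L ≤ |Hn - L| := le_abs_self _
    linarith
  rw [abs_sub_le_iff]
  by_cases hJ : ∃ j : ℕ, (1 ≤ j ∧ (j : ℝ) * ε' < L) ∧ y < t j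
  · set j0 := Nat.find hJ with hj0def
    obtain ⟨⟨hj1, hjL⟩, hyt⟩ := Nat.find_spec hJ
    have hj0k : j0 ≤ k := by
      have : (j0 : ℝ) * ε' < (k : ℝ) * ε' := lt_of_lt_of_le hjL hkL
      have : (j0 : ℝ) < (k : ℝ) := lt_of_mul_lt_mul_right this hε'.le
      exact_mod_cast this.le
    have hFnup : Fn y ≤ (j0 : ℝ) * ε' + δ := by
      have h1 : Fn y ≤ Gn (t j0) := hFnGn y (t j0) hyt
      have h2 : Gn (t j0) - G (t j0) ≤ δ :=
        (le_abs_self _).trans (hterm j0 hj0k).2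
      have h3 := hP1 j0 hj1 hjL
      linarith
    have hFup : F y ≤ (j0 : ℝ) * ε' := (hFG y (t j0) hyt).trans (hP1 j0 hj1 hjL)
    rcases eq_or_lt_of_le hj1 with h1 | h2
    · -- j0 = 1
      have hc : (j0 : ℝ) = 1 := by exact_mod_cast h1.symm
      constructor
      · have := hF0 y; rw [hc] at hFnup; linarith
      · have := hFn0 y; rw [hc] at hFup; linarith
    · -- 2 ≤ j0
      have hi1 : 1 ≤ j0 - 1 := by omega
      have hicast : ((j0 - 1 : ℕ) : ℝ) = (j0 : ℝ) - 1 := by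
        push_cast [Nat.cast_sub (show 1 ≤ j0 from hj1)]; ring
      have hiL : ((j0 - 1 : ℕ) : ℝ) * ε' < L := by
        rw [hicast]; nlinarith
      have hty : t (j0 - 1) ≤ y := by
        by_contra hcon
        push_neg at hcon
        exact Nat.find_min hJ (by omega) ⟨⟨hi1, hiL⟩, hcon⟩
      have hik : j0 - 1 ≤ k := by omega
      constructor
      · have hFy : ((j0 - 1 : ℕ) : ℝ) * ε' ≤ F y :=
          (hP2 _ hi1 hiL).trans (hFmono hty)
        rw [hicast] at hFy; nlinarith
      · have hFny : ((j0 - 1 : ℕ) : ℝ) * ε' - δ ≤ Fn y := by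
          have h1 : Fn (t (j0 - 1)) ≤ Fn y := hFnmono hty
          have h2 : F (t (j0 - 1)) - Fn (t (j0 - 1)) ≤ δ := by
            have := (hterm _ hik).1
            have := neg_abs_le (Fn (t (j0 - 1)) - F (t (j0 - 1)))
            linarith
          have h3 := hP2 _ hi1 hiL
          linarith
        rw [hicast] at hFny; nlinarith
  · push_neg at hJ
    by_cases hL : L ≤ ε'
    · constructor
      · have := hF0 y
        have := (hFnH y).trans hHn
        linarith
      · have := hFn0 y
        have := (hFL y).trans hL
        linarith
    · push_neg at hL
      have hk1 : 1 < (k : ℝ) := by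
        have : ε' < (k : ℝ) * ε' := hL.trans_le hkL
        nlinarith
    -- jm := k - 1
      have hk1' : 1 ≤ k - 1 := by
        have : (1 : ℕ) < k := by exact_mod_cast hk1
        omega
      have hkcast : ((k - 1 : ℕ) : ℝ) = (k : ℝ) - 1 := by
        have : (1:ℕ) ≤ k := by omega
        push_cast [Nat.cast_sub this]; ring
      have hjmL : ((k - 1 : ℕ) : ℝ) * ε' < L := by rw [hkcast]; exact hk2 hL
      have hty : t (k - 1) ≤ y := hJ (k - 1) ⟨hk1', hjmL⟩
      have hFy : L - ε' ≤ F y := by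
        have h1 : ((k - 1 : ℕ) : ℝ) * ε' ≤ F (t (k - 1)) := hP2 _ hk1' hjmL
        have h2 : F (t (k - 1)) ≤ F y := hFmono hty
        rw [hkcast] at h1; nlinarith
      constructor
      · have := (hFnH y).trans hHn
        linarith
      · have hFny : L - ε' - δ ≤ Fn y := by
          have h1 : Fn (t (k - 1)) ≤ Fn y := hFnmono hty
          have h2 : F (t (k - 1)) - Fn (t (k - 1)) ≤ δ := by
            have := (hterm (k-1) (by omega)).1
            have := neg_abs_le (Fn (t (k - 1)) - F (t (k - 1)))
            linarith
          have h3 : L - ε' ≤ F (t (k - 1)) := by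
            have := hP2 _ hk1' hjmL
            rw [hkcast] at this; nlinarith
          linarith
        have := hFL y
        linarith


private lemma grid_props (F G : ℝ → ℝ) (L : ℝ)
    (hFmono : Monotone F)
    (hbot : Tendsto (fun n : ℕ => F (-(n : ℝ))) atTop (𝓝 0))
    (htop : Tendsto (fun n : ℕ => F (n : ℝ)) atTop (𝓝 L))
    (hrc : ∀ t : ℝ, Tendsto (fun n : ℕ => F (t + 1 / ((n : ℝ) + 1))) atTop (𝓝 (F t)))
    (hlc : ∀ y : ℝ, Tendsto (fun n : ℕ => F (y - 1 / ((n : ℝ) + 1))) atTop (𝓝 (G y)))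
    (c : ℝ) (hc : 0 < c) (hcL : c < L) :
    c ≤ F (sInf {y | c ≤ F y}) ∧ G (sInf {y | c ≤ F y}) ≤ c := by
  set S : Set ℝ := {y | c ≤ F y} with hSdef
  have hne : S.Nonempty := by
    have : ∀ᶠ n : ℕ in atTop, F (n : ℝ) ∈ Ioi c := htop (Ioi_mem_nhds hcL)
    obtain ⟨n, hn⟩ := this.exists
    exact ⟨(n : ℝ), show c ≤ F (n : ℝ) from le_of_lt hn⟩
  have hbdd : BddBelow S := by
    have : ∀ᶠ n : ℕ in atTop, F (-(n : ℝ)) ∈ Iio c := hbot (Iio_mem_nhds hc)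
    obtain ⟨n, hn⟩ := this.exists
    refine ⟨-(n : ℝ), fun y hy => ?_⟩
    by_contra hcon
    push_neg at hcon
    exact absurd (le_trans hy (hFmono hcon.le)) (not_le.2 hn)
  set t := sInf S with htdef
  constructor
  · refine ge_of_tendsto (hrc t) (Eventually.of_forall fun n => ?_)
    have hpos : 0 < 1 / ((n : ℝ) + 1) := by positivity
    have : t < t + 1 / ((n : ℝ) + 1) := by linarith
    obtain ⟨w, hwS, hw⟩ := (csInf_lt_iff hbdd hne).1 this
    exact le_trans hwS (hFmono hw.le)
  · by_contra hcon
    push_neg at hcon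
    have : ∀ᶠ n : ℕ in atTop, F (t - 1 / ((n : ℝ) + 1)) ∈ Ioi c := (hlc t) (Ioi_mem_nhds hcon)
    obtain ⟨n, hn⟩ := this.exists
    have hlt : t - 1 / ((n : ℝ) + 1) < t := by
      have : 0 < 1 / ((n : ℝ) + 1) := by positivity
      linarith
    have hnotin : t - 1 / ((n : ℝ) + 1) ∉ S := fun hmem => absurd (csInf_le hbdd hmem) (not_le.2 hlt)
    exact hnotin (show c ≤ F (t - 1 / ((n : ℝ) + 1)) from le_of_lt hn)


private noncomputable def hFn {p : ℕ} (piInf : (Fin p → ℝ) → ℝ) (v : (Fin p → ℝ) × ℝ × ℝ) : ℝ :=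
  v.2.1 / piInf v.1

private noncomputable def uFn {p : ℕ} (piInf : (Fin p → ℝ) → ℝ) (y : ℝ) (v : (Fin p → ℝ) × ℝ × ℝ) : ℝ :=
  if v.2.2 ≤ y then hFn piInf v else 0

private noncomputable def uGn {p : ℕ} (piInf : (Fin p → ℝ) → ℝ) (y : ℝ) (v : (Fin p → ℝ) × ℝ × ℝ) : ℝ :=
  if v.2.2 < y then hFn piInf v else 0

/-- Weighted Glivenko–Cantelli property: if `(X_i, A_i, Y_i)` are i.i.d. copies of
`(X, A, Y)` and `π_∞ : ℝ^p → (0,1)` is measurable with `π_∞(X) ≥ i_∞ > 0` a.s., then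
`sup_y |(1/n) Σ_{i<n} A_i 1{Y_i ≤ y}/π_∞(X_i) - E[A 1{Y ≤ y}/π_∞(X)]| → 0` a.s. -/
theorem weighted_glivenko_cantelli
    {Ω : Type*} [MeasurableSpace Ω] {p : ℕ} (μ : Measure Ω) [IsProbabilityMeasure μ]
    (X : ℕ → Ω → (Fin p → ℝ)) (A : ℕ → Ω → ℝ) (Y : ℕ → Ω → ℝ)
    (hmeas : ∀ i, Measurable (fun ω => (X i ω, A i ω, Y i ω)))
    -- (X_i, A_i, Y_i), i ≥ 0, are i.i.d. copies of (X, A, Y) = (X_0, A_0, Y_0)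
    (hindep : iIndepFun (fun i ω => (X i ω, A i ω, Y i ω)) μ)
    (hident : ∀ i, IdentDistrib (fun ω => (X i ω, A i ω, Y i ω))
      (fun ω => (X 0 ω, A 0 ω, Y 0 ω)) μ μ)
    (hA01 : ∀ i ω, A i ω = 0 ∨ A i ω = 1)
    (piInf : (Fin p → ℝ) → ℝ)
    (hpiInf : Measurable piInf)
    (hpiInf01 : ∀ x, piInf x ∈ Set.Ioo (0:ℝ) 1)
    -- π_∞(X) ≥ i_∞ > 0 almost surely
    (hlower : ∃ iInf : ℝ, 0 < iInf ∧ ∀ᵐ ω ∂μ, iInf ≤ piInf (X 0 ω)) :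
    ∀ᵐ ω ∂μ, TendstoUniformly
      (fun (n : ℕ) (y : ℝ) => (n : ℝ)⁻¹ * ∑ i ∈ Finset.range n,
        (if Y i ω ≤ y then A i ω / piInf (X i ω) else 0))
      (fun y => ∫ ω', (if Y 0 ω' ≤ y then A 0 ω' / piInf (X 0 ω') else 0) ∂μ)
      atTop := by

  classical
  obtain ⟨iInf, hi0, hi⟩ := hlower
  set Z : ℕ → Ω → (Fin p → ℝ) × ℝ × ℝ := fun i ω => (X i ω, A i ω, Y i ω) with hZ
  -- measurability
  have hmeasH : Measurable (hFn piInf) := by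
    unfold hFn
    exact (measurable_snd.fst).div (hpiInf.comp measurable_fst)
  have hmeasU : ∀ y : ℝ, Measurable (uFn piInf y) := by
    intro y; unfold uFn
    exact Measurable.ite (measurableSet_le measurable_snd.snd measurable_const)
      hmeasH measurable_const
  have hmeasU' : ∀ y : ℝ, Measurable (uGn piInf y) := by
    intro y; unfold uGn
    exact Measurable.ite (measurableSet_lt measurable_snd.snd measurable_const)
      hmeasH measurable_const
  -- pointwise facts
  have hpos : ∀ i ω, 0 < piInf (X i ω) := fun i ω => (hpiInf01 _).1
  have hA0 : ∀ i ω, 0 ≤ A i ω := fun i ω => by rcases hA01 i ω with h | h <;> simp [h]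
  have hH0 : ∀ i ω, 0 ≤ hFn piInf (Z i ω) := fun i ω =>
    div_nonneg (hA0 i ω) (hpos i ω).le
  have hU0 : ∀ (y : ℝ) i ω, 0 ≤ uFn piInf y (Z i ω) := by
    intro y i ω; unfold uFn; split_ifs
    exacts [hH0 i ω, le_rfl]
  have hU'0 : ∀ (y : ℝ) i ω, 0 ≤ uGn piInf y (Z i ω) := by
    intro y i ω; unfold uGn; split_ifs
    exacts [hH0 i ω, le_rfl]
  have hUle : ∀ (y : ℝ) i ω, uFn piInf y (Z i ω) ≤ hFn piInf (Z i ω) := by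
    intro y i ω; unfold uFn; split_ifs
    exacts [le_rfl, hH0 i ω]
  have hU'le : ∀ (y : ℝ) i ω, uGn piInf y (Z i ω) ≤ uFn piInf y (Z i ω) := by
    intro y i ω; unfold uGn uFn; split_ifs with h1 h2
    · exact le_rfl
    · exact absurd h1.le h2
    · exact hH0 i ω
    · exact le_rfl
  have hUmono : ∀ i ω, Monotone (fun y => uFn piInf y (Z i ω)) := by
    intro i ω z y hzy; dsimp only; unfold uFn; split_ifs with h1 h2
    · exact le_rfl
    · exact absurd (h1.trans hzy) h2
    · exact hH0 i ω
    · exact le_rfl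
  have hUGlt : ∀ z y : ℝ, z < y → ∀ i ω, uFn piInf z (Z i ω) ≤ uGn piInf y (Z i ω) := by
    intro z y hzy i ω; unfold uFn uGn; split_ifs with h1 h2
    · exact le_rfl
    · exact absurd (lt_of_le_of_lt h1 hzy) h2
    · exact hH0 i ω
    · exact le_rfl
  -- a.e. bound
  have haeb : ∀ᵐ ω ∂μ, hFn piInf (Z 0 ω) ≤ iInf⁻¹ := by
    filter_upwards [hi] with ω hω
    rcases hA01 0 ω with h | h
    · show A 0 ω / piInf (X 0 ω) ≤ iInf⁻¹
      rw [h, zero_div]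
      positivity
    · show A 0 ω / piInf (X 0 ω) ≤ iInf⁻¹
      rw [h, one_div]
      exact inv_anti₀ hi0 hω
  -- integrability
  have hint : ∀ g : ((Fin p → ℝ) × ℝ × ℝ) → ℝ, Measurable g →
      (∀ ω, |g (Z 0 ω)| ≤ hFn piInf (Z 0 ω)) → Integrable (fun ω => g (Z 0 ω)) μ := by
    intro g hg hb
    refine (integrable_const iInf⁻¹).mono' ((hg.comp (hmeas 0)).aestronglyMeasurable) ?_
    filter_upwards [haeb] with ω hω
    rw [Real.norm_eq_abs]
    exact (hb ω).trans hω
  have habsH : ∀ ω, |hFn piInf (Z 0 ω)| ≤ hFn piInf (Z 0 ω) := fun ω =>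
    le_of_eq (abs_of_nonneg (hH0 0 ω))
  have habsU : ∀ (y : ℝ) ω, |uFn piInf y (Z 0 ω)| ≤ hFn piInf (Z 0 ω) := fun y ω => by
    rw [abs_of_nonneg (hU0 y 0 ω)]; exact hUle y 0 ω
  have habsU' : ∀ (y : ℝ) ω, |uGn piInf y (Z 0 ω)| ≤ hFn piInf (Z 0 ω) := fun y ω => by
    rw [abs_of_nonneg (hU'0 y 0 ω)]; exact (hU'le y 0 ω).trans (hUle y 0 ω)
  have hintH : Integrable (fun ω => hFn piInf (Z 0 ω)) μ := hint _ hmeasH habsH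
  have hintU : ∀ y : ℝ, Integrable (fun ω => uFn piInf y (Z 0 ω)) μ := fun y =>
    hint _ (hmeasU y) (habsU y)
  have hintU' : ∀ y : ℝ, Integrable (fun ω => uGn piInf y (Z 0 ω)) μ := fun y =>
    hint _ (hmeasU' y) (habsU' y)
  -- strong law, generic
  have hslln : ∀ g : ((Fin p → ℝ) × ℝ × ℝ) → ℝ, Measurable g →
      (∀ ω, |g (Z 0 ω)| ≤ hFn piInf (Z 0 ω)) →
      ∀ᵐ ω ∂μ, Tendsto (fun n : ℕ => (∑ i ∈ Finset.range n, g (Z i ω)) / n) atTop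
        (𝓝 (∫ ω', g (Z 0 ω') ∂μ)) := by
    intro g hg hb
    have h1 : Pairwise (Function.onFun (IndepFun · · μ) fun i ω => g (Z i ω)) := by
      intro i j hij
      exact (hindep.indepFun hij).comp hg hg
    have h2 : ∀ i, IdentDistrib (fun ω => g (Z i ω)) (fun ω => g (Z 0 ω)) μ μ := fun i =>
      (hident i).comp hg
    exact strong_law_ae_real (fun i ω => g (Z i ω)) (hint g hg hb) h1 h2
  -- F, G, L
  set Fi : ℝ → ℝ := fun y => ∫ ω', uFn piInf y (Z 0 ω') ∂μ with hFidef
  set Gi : ℝ → ℝ := fun y => ∫ ω', uGn piInf y (Z 0 ω') ∂μ with hGidef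
  set L : ℝ := ∫ ω', hFn piInf (Z 0 ω') ∂μ with hLdef
  have hFmono : Monotone Fi := fun z y hzy =>
    integral_mono (hintU z) (hintU y) fun ω => hUmono 0 ω hzy
  have hF0 : ∀ y, 0 ≤ Fi y := fun y => integral_nonneg fun ω => hU0 y 0 ω
  have hFL : ∀ y, Fi y ≤ L := fun y => integral_mono (hintU y) hintH fun ω => hUle y 0 ω
  have hFGi : ∀ z y : ℝ, z < y → Fi z ≤ Gi y := fun z y h =>
    integral_mono (hintU z) (hintU' y) fun ω => hUGlt z y h 0 ω
  -- dominated convergence, generic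
  have hdct : ∀ (c : ℕ → ℝ) (ψ : ((Fin p → ℝ) × ℝ × ℝ) → ℝ), Measurable ψ →
      (∀ ω, Tendsto (fun n => uFn piInf (c n) (Z 0 ω)) atTop (𝓝 (ψ (Z 0 ω)))) →
      Tendsto (fun n => Fi (c n)) atTop (𝓝 (∫ ω', ψ (Z 0 ω') ∂μ)) := by
    intro c ψ hψ hlim
    refine tendsto_integral_of_dominated_convergence (fun ω => hFn piInf (Z 0 ω))
      (fun n => ((hmeasU (c n)).comp (hmeas 0)).aestronglyMeasurable) hintH
      (fun n => Eventually.of_forall fun ω => ?_) (Eventually.of_forall hlim)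
    rw [Real.norm_eq_abs]
    exact habsU (c n) ω
  have honediv : Tendsto (fun n : ℕ => 1 / ((n : ℝ) + 1)) atTop (𝓝 0) :=
    tendsto_one_div_add_atTop_nhds_zero_nat
  -- the four limits
  have hbot : Tendsto (fun n : ℕ => Fi (-(n : ℝ))) atTop (𝓝 0) := by
    have h0 : (0 : ℝ) = ∫ ω', (fun _ : ((Fin p → ℝ) × ℝ × ℝ) => (0:ℝ)) (Z 0 ω') ∂μ := by simp
    rw [h0]
    refine hdct _ _ measurable_const fun ω => ?_
    obtain ⟨n0, hn0⟩ := exists_nat_gt (-(Y 0 ω))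
    have hev : ∀ᶠ n : ℕ in atTop, uFn piInf (-(n:ℝ)) (Z 0 ω) = 0 := by
      filter_upwards [eventually_ge_atTop n0] with n hn
      have : -(n:ℝ) < Y 0 ω := by
        have : (n0 : ℝ) ≤ (n : ℝ) := by exact_mod_cast hn
        linarith
      unfold uFn
      rw [if_neg (not_le.2 this)]
    exact Tendsto.congr' (hev.mono fun n h => h.symm) tendsto_const_nhds
  have htop : Tendsto (fun n : ℕ => Fi ((n : ℝ))) atTop (𝓝 L) := by
    rw [hLdef]
    refine hdct _ _ hmeasH fun ω => ?_
    obtain ⟨n0, hn0⟩ := exists_nat_gt (Y 0 ω)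
    have hev : ∀ᶠ n : ℕ in atTop, uFn piInf ((n:ℝ)) (Z 0 ω) = hFn piInf (Z 0 ω) := by
      filter_upwards [eventually_ge_atTop n0] with n hn
      have : Y 0 ω ≤ (n:ℝ) := by
        have : (n0 : ℝ) ≤ (n : ℝ) := by exact_mod_cast hn
        linarith
      unfold uFn
      rw [if_pos this]
    exact Tendsto.congr' (hev.mono fun n h => h.symm) tendsto_const_nhds
  have hrc : ∀ t : ℝ, Tendsto (fun n : ℕ => Fi (t + 1 / ((n : ℝ) + 1))) atTop (𝓝 (Fi t)) := by
    intro t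
    rw [hFidef]
    refine hdct _ _ (hmeasU t) fun ω => ?_
    rcases le_or_gt (Y 0 ω) t with hY | hY
    · refine tendsto_const_nhds.congr fun n => ?_
      have h1 : (0:ℝ) < 1 / ((n:ℝ) + 1) := by positivity
      unfold uFn
      rw [if_pos hY, if_pos (by linarith : Y 0 ω ≤ t + 1 / ((n:ℝ) + 1))]
    · have hz : uFn piInf t (Z 0 ω) = 0 := by unfold uFn; rw [if_neg (not_le.2 hY)]
      rw [hz]
      have hev : ∀ᶠ n : ℕ in atTop, uFn piInf (t + 1 / ((n:ℝ)+1)) (Z 0 ω) = 0 := by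
        filter_upwards [honediv (Iio_mem_nhds (by linarith : (0:ℝ) < Y 0 ω - t))] with n hn
        have hn' : 1 / ((n:ℝ) + 1) < Y 0 ω - t := hn
        unfold uFn
        rw [if_neg (not_le.2 (by linarith : t + 1 / ((n:ℝ)+1) < Y 0 ω))]
      exact Tendsto.congr' (hev.mono fun n h => h.symm) tendsto_const_nhds
  have hlc : ∀ y : ℝ, Tendsto (fun n : ℕ => Fi (y - 1 / ((n : ℝ) + 1))) atTop (𝓝 (Gi y)) := by
    intro y
    rw [hGidef]
    refine hdct _ _ (hmeasU' y) fun ω => ?_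
    rcases lt_or_ge (Y 0 ω) y with hY | hY
    · have hz : uGn piInf y (Z 0 ω) = hFn piInf (Z 0 ω) := by unfold uGn; rw [if_pos hY]
      rw [hz]
      have hev : ∀ᶠ n : ℕ in atTop, uFn piInf (y - 1 / ((n:ℝ)+1)) (Z 0 ω) = hFn piInf (Z 0 ω) := by
        filter_upwards [honediv (Iio_mem_nhds (by linarith : (0:ℝ) < y - Y 0 ω))] with n hn
        have hn' : 1 / ((n:ℝ) + 1) < y - Y 0 ω := hn
        unfold uFn
        rw [if_pos (by linarith : Y 0 ω ≤ y - 1 / ((n:ℝ)+1))]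
      exact Tendsto.congr' (hev.mono fun n h => h.symm) tendsto_const_nhds
    · have hz : uGn piInf y (Z 0 ω) = 0 := by unfold uGn; rw [if_neg (not_lt.2 hY)]
      rw [hz]
      refine tendsto_const_nhds.congr fun n => ?_
      have h1 : (0:ℝ) < 1 / ((n:ℝ) + 1) := by positivity
      unfold uFn
      rw [if_neg (not_le.2 (by linarith : y - 1 / ((n:ℝ)+1) < Y 0 ω))]
  -- good events
  have hae1 := hslln _ hmeasH habsH
  have hae2 : ∀ᵐ ω ∂μ, ∀ m j : ℕ,
      Tendsto (fun n : ℕ => (∑ i ∈ Finset.range n,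
          uFn piInf (sInf {y | (j:ℝ) * (1 / ((m:ℝ)+1)) ≤ Fi y}) (Z i ω)) / n) atTop
        (𝓝 (Fi (sInf {y | (j:ℝ) * (1 / ((m:ℝ)+1)) ≤ Fi y}))) ∧
      Tendsto (fun n : ℕ => (∑ i ∈ Finset.range n,
          uGn piInf (sInf {y | (j:ℝ) * (1 / ((m:ℝ)+1)) ≤ Fi y}) (Z i ω)) / n) atTop
        (𝓝 (Gi (sInf {y | (j:ℝ) * (1 / ((m:ℝ)+1)) ≤ Fi y}))) := by
    rw [ae_all_iff]
    intro m
    rw [ae_all_iff]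
    intro j
    filter_upwards [hslln _ (hmeasU (sInf {y | (j:ℝ) * (1 / ((m:ℝ)+1)) ≤ Fi y})) (habsU _),
      hslln _ (hmeasU' (sInf {y | (j:ℝ) * (1 / ((m:ℝ)+1)) ≤ Fi y})) (habsU' _)] with ω h1 h2
    exact ⟨h1, h2⟩
  filter_upwards [hae1, hae2] with ω hHn hGrid
  rw [Metric.tendstoUniformly_iff]
  intro ε hε
  obtain ⟨m, hm⟩ := exists_nat_one_div_lt (show (0:ℝ) < ε/2 by linarith)
  set ε' : ℝ := 1 / ((m:ℝ) + 1) with hε'def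
  have hε'pos : (0:ℝ) < ε' := by positivity
  have hεε' : ε' < ε / 2 := hm
  set t : ℕ → ℝ := fun j => sInf {y | (j:ℝ) * ε' ≤ Fi y} with htdef
  set k : ℕ := ⌈L / ε'⌉₊ with hkdef
  have hkL : L ≤ (k:ℝ) * ε' := by
    have h1 := Nat.le_ceil (L / ε')
    rw [div_le_iff₀ hε'pos] at h1
    exact h1
  have hk2 : ε' < L → ((k:ℝ) - 1) * ε' < L := by
    intro hL
    have h1 : (0:ℝ) ≤ L / ε' := div_nonneg (by linarith) hε'pos.le
    have h2 : ((⌈L / ε'⌉₊ : ℕ) : ℝ) < L / ε' + 1 := Nat.ceil_lt_add_one h1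
    have h4 : L / ε' * ε' = L := div_mul_cancel₀ L hε'pos.ne'
    rw [hkdef]
    nlinarith
  have hP : ∀ j : ℕ, 1 ≤ j → (j:ℝ) * ε' < L →
      (j:ℝ) * ε' ≤ Fi (t j) ∧ Gi (t j) ≤ (j:ℝ) * ε' := by
    intro j hj hjL
    have hc : (0:ℝ) < (j:ℝ) * ε' := by
      have : (1:ℝ) ≤ (j:ℝ) := by exact_mod_cast hj
      nlinarith
    exact grid_props Fi Gi L hFmono hbot htop hrc hlc ((j:ℝ)*ε') hc hjL
  -- retype the grid limits
  have hHn' : Tendsto (fun n : ℕ => (∑ i ∈ Finset.range n, hFn piInf (Z i ω)) / n) atTop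
      (𝓝 L) := hHn
  have hGrid1 : ∀ j : ℕ, Tendsto (fun n : ℕ =>
      (∑ i ∈ Finset.range n, uFn piInf (t j) (Z i ω)) / n) atTop (𝓝 (Fi (t j))) :=
    fun j => (hGrid m j).1
  have hGrid2 : ∀ j : ℕ, Tendsto (fun n : ℕ =>
      (∑ i ∈ Finset.range n, uGn piInf (t j) (Z i ω)) / n) atTop (𝓝 (Gi (t j))) :=
    fun j => (hGrid m j).2
  -- the error term
  set δ : ℕ → ℝ := fun n => |(∑ i ∈ Finset.range n, hFn piInf (Z i ω)) / n - L| +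
      ∑ j ∈ Finset.range (k+1),
        (|(∑ i ∈ Finset.range n, uFn piInf (t j) (Z i ω)) / n - Fi (t j)| +
         |(∑ i ∈ Finset.range n, uGn piInf (t j) (Z i ω)) / n - Gi (t j)|) with hδdef
  have hδ0 : Tendsto δ atTop (𝓝 0) := by
    have h1 : Tendsto (fun n : ℕ =>
        |(∑ i ∈ Finset.range n, hFn piInf (Z i ω)) / n - L|) atTop (𝓝 0) := by
      have := (hHn'.sub (tendsto_const_nhds (x := L))).abs
      simpa using this
    have h3 : ∀ j ∈ Finset.range (k+1), Tendsto (fun n : ℕ =>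
        |(∑ i ∈ Finset.range n, uFn piInf (t j) (Z i ω)) / n - Fi (t j)| +
        |(∑ i ∈ Finset.range n, uGn piInf (t j) (Z i ω)) / n - Gi (t j)|) atTop (𝓝 0) := by
      intro j _
      have e1 : Tendsto (fun n : ℕ =>
          |(∑ i ∈ Finset.range n, uFn piInf (t j) (Z i ω)) / n - Fi (t j)|) atTop (𝓝 0) := by
        have := ((hGrid1 j).sub (tendsto_const_nhds (x := Fi (t j)))).abs
        simpa using this
      have e2 : Tendsto (fun n : ℕ =>
          |(∑ i ∈ Finset.range n, uGn piInf (t j) (Z i ω)) / n - Gi (t j)|) atTop (𝓝 0) := by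
        have := ((hGrid2 j).sub (tendsto_const_nhds (x := Gi (t j)))).abs
        simpa using this
      simpa using e1.add e2
    have h2 := tendsto_finset_sum (Finset.range (k+1)) h3
    have h4 := h1.add h2
    simpa using h4
  have hev : ∀ᶠ n : ℕ in atTop, δ n < ε - ε' :=
    hδ0 (Iio_mem_nhds (by linarith : (0:ℝ) < ε - ε'))
  filter_upwards [hev] with n hn
  intro y
  -- empirical function properties
  have hFnmono : Monotone (fun y : ℝ => (∑ i ∈ Finset.range n, uFn piInf y (Z i ω)) / n) := by
    intro z y' hzy
    dsimp only
    rw [div_eq_inv_mul, div_eq_inv_mul]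
    exact mul_le_mul_of_nonneg_left (Finset.sum_le_sum fun i _ => hUmono i ω hzy)
      (by positivity)
  have hFn0 : ∀ y' : ℝ, 0 ≤ (∑ i ∈ Finset.range n, uFn piInf y' (Z i ω)) / n := fun y' =>
    div_nonneg (Finset.sum_nonneg fun i _ => hU0 y' i ω) (Nat.cast_nonneg n)
  have hFnH : ∀ y' : ℝ, (∑ i ∈ Finset.range n, uFn piInf y' (Z i ω)) / n ≤
      (∑ i ∈ Finset.range n, hFn piInf (Z i ω)) / n := by
    intro y'
    rw [div_eq_inv_mul, div_eq_inv_mul]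
    exact mul_le_mul_of_nonneg_left (Finset.sum_le_sum fun i _ => hUle y' i ω)
      (by positivity)
  have hFnGn : ∀ z y' : ℝ, z < y' →
      (∑ i ∈ Finset.range n, uFn piInf z (Z i ω)) / n ≤
      (∑ i ∈ Finset.range n, uGn piInf y' (Z i ω)) / n := by
    intro z y' hzy
    rw [div_eq_inv_mul, div_eq_inv_mul]
    exact mul_le_mul_of_nonneg_left (Finset.sum_le_sum fun i _ => hUGlt z y' hzy i ω)
      (by positivity)
  have hb := gc_bound Fi Gi
      (fun y' => (∑ i ∈ Finset.range n, uFn piInf y' (Z i ω)) / n)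
      (fun y' => (∑ i ∈ Finset.range n, uGn piInf y' (Z i ω)) / n)
      L ((∑ i ∈ Finset.range n, hFn piInf (Z i ω)) / n) ε' hε'pos k t hkL hk2
      hFmono hF0 hFL hFGi
      (fun j hj hjL => (hP j hj hjL).2) (fun j hj hjL => (hP j hj hjL).1)
      hFnmono hFn0 hFnH hFnGn y
  have hbδ : |(∑ i ∈ Finset.range n, uFn piInf y (Z i ω)) / n - Fi y| ≤ δ n + ε' := hb
  have hfin : dist (Fi y) ((∑ i ∈ Finset.range n, uFn piInf y (Z i ω)) / n) < ε := by
    rw [Real.dist_eq, abs_sub_comm]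
    calc |(∑ i ∈ Finset.range n, uFn piInf y (Z i ω)) / n - Fi y| ≤ δ n + ε' := hbδ
      _ < ε := by linarith
  rw [show ((n:ℝ)⁻¹ * ∑ i ∈ Finset.range n, (if Y i ω ≤ y then A i ω / piInf (X i ω) else 0))
      = (∑ i ∈ Finset.range n, uFn piInf y (Z i ω)) / n from (div_eq_inv_mul _ _).symm]
  exact hfin
end

section
/- Under assumptions A1 and A2, the normalized IPW empirical distribution function is uniformly approximated by its oracle-weighted version: P( lim_{n→∞} sup_y | F̃₁(y) − (1/(φ n)) Σ_{i=1}^n A_i 1{Y_i ≤ y}/π_∞(X_i) | = 0 ) = 1. -/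
open MeasureTheory ProbabilityTheory Filter Topology Set

lemma isOpen_compl_msupport {E : Type*} [TopologicalSpace E] [MeasurableSpace E]
    (ν : Measure E) : IsOpen (msupport ν)ᶜ := by
  rw [isOpen_iff_mem_nhds]
  intro x hx
  simp only [msupport, mem_compl_iff, mem_setOf_eq, not_forall, not_lt] at hx
  obtain ⟨U, hU, hU0⟩ := hx
  have hU0' : ν U = 0 := le_antisymm hU0 zero_le
  obtain ⟨V, hVU, hVopen, hxV⟩ := mem_nhds_iff.mp hU
  refine Filter.mem_of_superset (hVopen.mem_nhds hxV) ?_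
  intro y hyV
  simp only [mem_compl_iff, msupport, mem_setOf_eq, not_forall, not_lt]
  exact ⟨V, hVopen.mem_nhds hyV, le_of_eq (measure_mono_null hVU hU0')⟩

lemma msupport_compl_null {E : Type*} [TopologicalSpace E] [SecondCountableTopology E]
    [MeasurableSpace E] (ν : Measure E) : ν (msupport ν)ᶜ = 0 := by
  apply measure_null_of_locally_null
  intro x hx
  simp only [msupport, mem_compl_iff, mem_setOf_eq, not_forall, not_lt] at hx
  obtain ⟨U, hU, hU0⟩ := hx
  exact ⟨U, mem_nhdsWithin_of_mem_nhds hU, le_antisymm hU0 zero_le⟩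

/-- Under A1 and A2, the normalized IPW empirical distribution function is uniformly
approximated by its oracle-weighted version:
`sup_y |F̃₁(y) - (1/(φ n)) Σ_{i<n} A_i 1{Y_i ≤ y}/π_∞(X_i)| → 0` almost surely. -/
theorem F1tilde_oracle_approximation
    {Ω : Type*} [MeasurableSpace Ω] {p : ℕ} (μ : Measure Ω) [IsProbabilityMeasure μ]
    (X : ℕ → Ω → (Fin p → ℝ)) (A : ℕ → Ω → ℝ) (Y : ℕ → Ω → ℝ)
    (hmeas : ∀ i, Measurable (fun ω => (X i ω, A i ω, Y i ω)))
    -- (X_i, A_i, Y_i), i ≥ 0, are i.i.d. copies of (X, A, Y) = (X_0, A_0, Y_0)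
    (hindep : iIndepFun (fun i ω => (X i ω, A i ω, Y i ω)) μ)
    (hident : ∀ i, IdentDistrib (fun ω => (X i ω, A i ω, Y i ω))
      (fun ω => (X 0 ω, A 0 ω, Y 0 ω)) μ μ)
    (hA01 : ∀ i ω, A i ω = 0 ∨ A i ω = 1)
    (pi piInf : (Fin p → ℝ) → ℝ)
    (hpi : Measurable pi) (hpiInf : Measurable piInf)
    (hpiInf01 : ∀ x, piInf x ∈ Set.Ioo (0:ℝ) 1)
    -- π(X) is a version of the conditional probability P(A = 1 | X)
    (hver : μ[A 0 | MeasurableSpace.comap (X 0) inferInstance] =ᵐ[μ] fun ω => pi (X 0 ω))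
    -- the sequence of random functions π̂_n, with values in (0,1), measurable in (ω, x)
    (piHat : ℕ → Ω → (Fin p → ℝ) → ℝ)
    (hpiHatMeas : ∀ n, Measurable (fun q : Ω × (Fin p → ℝ) => piHat n q.1 q.2))
    (hpiHat01 : ∀ n ω x, piHat n ω x ∈ Set.Ioo (0:ℝ) 1)
    -- Assumption A1: sup_{x ∈ S_X} |π̂_n(x) - π_∞(x)| → 0 a.s.
    (hA1 : ∀ᵐ ω ∂μ, TendstoUniformlyOn (fun n x => piHat n ω x) piInf atTop
      (msupport (μ.map (X 0))))
    -- Assumption A2: inf_{x ∈ S_X} π_∞(x) = i_∞ > 0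
    (hA2 : ∃ iInf : ℝ, 0 < iInf ∧ ∀ x ∈ msupport (μ.map (X 0)), iInf ≤ piInf x)
    -- C_n = Σ_{i<n} A_i / π̂_n(X_i)
    (C : ℕ → Ω → ℝ)
    (hC : ∀ n ω, C n ω = ∑ i ∈ Finset.range n, A i ω / piHat n ω (X i ω))
    -- F̃₁(y) = C_n⁻¹ Σ_{i<n} A_i 1{Y_i ≤ y} / π̂_n(X_i)
    (F1tilde : ℕ → Ω → ℝ → ℝ)
    (hF1tilde : ∀ n ω y, F1tilde n ω y =
      (C n ω)⁻¹ * ∑ i ∈ Finset.range n,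
        (if Y i ω ≤ y then A i ω / piHat n ω (X i ω) else 0))
    -- φ = E[π(X)/π_∞(X)]
    (φ : ℝ) (hφ : φ = ∫ ω, pi (X 0 ω) / piInf (X 0 ω) ∂μ) :
    ∀ᵐ ω ∂μ, TendstoUniformly
      (fun (n : ℕ) (y : ℝ) => F1tilde n ω y -
        (φ * n)⁻¹ * ∑ i ∈ Finset.range n,
          (if Y i ω ≤ y then A i ω / piInf (X i ω) else 0))
      (fun _ => 0) atTop := by
  classical
  have mX : ∀ i, Measurable (X i) := fun i => (hmeas i).fst
  have mA : ∀ i, Measurable (A i) := fun i => (hmeas i).snd.fst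
  obtain ⟨iInf, hiInf_pos, hiInf_le⟩ := hA2
  set ν : Measure (Fin p → ℝ) := μ.map (X 0) with hνdef
  set S : Set (Fin p → ℝ) := msupport ν with hSdef
  -- a.s. all X i lie in the support S
  have hXmem : ∀ᵐ ω ∂μ, ∀ i, X i ω ∈ S := by
    rw [ae_all_iff]
    intro i
    have hident_i : IdentDistrib (X i) (X 0) μ μ := (hident i).comp measurable_fst
    have hmap : μ.map (X i) = ν := hident_i.map_eq
    have hmeasS : MeasurableSet Sᶜ := (isOpen_compl_msupport ν).measurableSet
    have hnull : μ (X i ⁻¹' Sᶜ) = 0 := by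
      rw [← Measure.map_apply (mX i) hmeasS, hmap]
      exact msupport_compl_null ν
    rw [ae_iff]
    exact hnull
  have hA01' : ∀ i ω, 0 ≤ A i ω ∧ A i ω ≤ 1 := by
    intro i ω; rcases hA01 i ω with h | h <;> simp [h]
  -- the oracle-weighted variables
  set V : ℕ → Ω → ℝ := fun i ω => A i ω / piInf (X i ω) with hV
  have hg : Measurable (fun q : (Fin p → ℝ) × ℝ × ℝ => q.2.1 / piInf q.1) :=
    measurable_snd.fst.div (hpiInf.comp measurable_fst)
  have mV : ∀ i, Measurable (V i) := fun i => (mA i).div (hpiInf.comp (mX i))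
  have hVident : ∀ i, IdentDistrib (V i) (V 0) μ μ := fun i => (hident i).comp hg
  have hVindep : Pairwise (Function.onFun (IndepFun · · μ) V) := fun i j hij =>
    (hindep.indepFun hij).comp hg hg
  have hVnonneg : ∀ i ω, 0 ≤ V i ω := fun i ω =>
    div_nonneg (hA01' i ω).1 (hpiInf01 (X i ω)).1.le
  have hVbound : ∀ i ω, X i ω ∈ S → V i ω ≤ iInf⁻¹ := by
    intro i ω hmem
    have h1 : iInf ≤ piInf (X i ω) := hiInf_le _ hmem
    have h2 : 0 < piInf (X i ω) := (hpiInf01 _).1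
    calc V i ω ≤ 1 / iInf := div_le_div₀ zero_le_one (hA01' i ω).2 hiInf_pos h1
      _ = iInf⁻¹ := one_div iInf
  have hVint : Integrable (V 0) μ := by
    refine Integrable.mono' (integrable_const iInf⁻¹) (mV 0).aestronglyMeasurable ?_
    filter_upwards [hXmem] with ω hω
    rw [Real.norm_eq_abs, abs_of_nonneg (hVnonneg 0 ω)]
    exact hVbound 0 ω (hω 0)
  have hSLLN := strong_law_ae_real V hVint hVindep hVident
  -- the expectation of V 0 is φ
  have hEV : ∫ ω, V 0 ω ∂μ = φ := by
    set m : MeasurableSpace Ω := MeasurableSpace.comap (X 0) inferInstance with hm_def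
    have hm : m ≤ _ := (mX 0).comap_le
    set f : Ω → ℝ := fun ω => (piInf (X 0 ω))⁻¹ with hf_def
    have hX0m : Measurable[m] (X 0) := Measurable.of_comap_le le_rfl
    have hf_sm : StronglyMeasurable[m] f :=
      (Measurable.stronglyMeasurable ((hpiInf.inv).comp hX0m))
    have hA0int : Integrable (A 0) μ := by
      refine Integrable.mono' (integrable_const 1) (mA 0).aestronglyMeasurable ?_
      refine ae_of_all _ fun ω => ?_
      rw [Real.norm_eq_abs, abs_of_nonneg (hA01' 0 ω).1]; exact (hA01' 0 ω).2
    have hf_bound : ∀ᵐ ω ∂μ, ‖f ω‖ ≤ iInf⁻¹ := by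
      filter_upwards [hXmem] with ω hω
      rw [Real.norm_eq_abs, abs_of_nonneg (inv_nonneg.mpr (hpiInf01 _).1.le)]
      exact inv_anti₀ hiInf_pos (hiInf_le _ (hω 0))
    have key := condExp_stronglyMeasurable_mul_of_bound hm hf_sm hA0int iInf⁻¹ hf_bound
    have h1 : ∫ ω, V 0 ω ∂μ = ∫ ω, (f * A 0) ω ∂μ := by
      refine integral_congr_ae (ae_of_all _ fun ω => ?_)
      simp only [hV, hf_def, Pi.mul_apply, div_eq_mul_inv, mul_comm]
    have h2 : ∫ ω, (f * A 0) ω ∂μ = ∫ ω, (μ[f * A 0 | m]) ω ∂μ := (integral_condExp hm).symm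
    have h3 : ∫ ω, (μ[f * A 0|m]) ω ∂μ = ∫ ω, (f ω) * ((μ[A 0|m]) ω) ∂μ :=
      integral_congr_ae (key.mono fun ω h => by simpa using h)
    have h4 : ∫ ω, (f ω) * ((μ[A 0|m]) ω) ∂μ = ∫ ω, pi (X 0 ω) / piInf (X 0 ω) ∂μ := by
      refine integral_congr_ae ?_
      filter_upwards [hver] with ω hω
      rw [hω]
      simp only [hf_def, div_eq_mul_inv, mul_comm]
    rw [h1, h2, h3, h4, hφ]
  have hφ_nonneg : 0 ≤ φ := hEV ▸ integral_nonneg (fun ω => hVnonneg 0 ω)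
  rcases eq_or_lt_of_le hφ_nonneg with hφ0 | hφpos
  · -- degenerate case φ = 0 : then A i = 0 a.s. and everything vanishes
    have hV0zero : ∀ᵐ ω ∂μ, V 0 ω = 0 := by
      have := (integral_eq_zero_iff_of_nonneg (fun ω => hVnonneg 0 ω) hVint).mp
        (by rw [hEV]; exact hφ0.symm)
      filter_upwards [this] with ω hω using hω
    have hAzero : ∀ᵐ ω ∂μ, ∀ i, A i ω = 0 := by
      rw [ae_all_iff]
      intro i
      have hVi : ∀ᵐ ω ∂μ, V i ω = 0 :=
        (hVident i).symm.ae_snd (p := fun x => x = 0) measurableSet_eq hV0zero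
      filter_upwards [hVi] with ω hω
      rcases div_eq_zero_iff.mp hω with h | h
      · exact h
      · exact absurd h (ne_of_gt (hpiInf01 _).1)
    filter_upwards [hAzero] with ω hA0ω
    have hzero : (fun (n : ℕ) (y : ℝ) => F1tilde n ω y -
        (φ * n)⁻¹ * ∑ i ∈ Finset.range n,
          (if Y i ω ≤ y then A i ω / piInf (X i ω) else 0)) = fun _ _ => (0:ℝ) := by
      funext n y
      have hs : ∀ i ∈ Finset.range n,
          (if Y i ω ≤ y then A i ω / piHat n ω (X i ω) else 0) = 0 := by
        intro i _; rw [hA0ω i]; simp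
      have ht : ∀ i ∈ Finset.range n,
          (if Y i ω ≤ y then A i ω / piInf (X i ω) else 0) = 0 := by
        intro i _; rw [hA0ω i]; simp
      rw [hF1tilde, Finset.sum_eq_zero hs, Finset.sum_eq_zero ht]
      simp
    rw [hzero]
    intro u hu
    filter_upwards with n y
    exact refl_mem_uniformity hu
  · -- main case φ > 0
    have hSLLN' : ∀ᵐ ω ∂μ, Tendsto
        (fun n : ℕ => (∑ i ∈ Finset.range n, A i ω / piInf (X i ω)) / n) atTop (𝓝 φ) := by
      filter_upwards [hSLLN] with ω hω
      have : μ[V 0] = φ := hEV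
      rw [this] at hω
      simpa only [hV] using hω
    filter_upwards [hXmem, hSLLN', hA1] with ω hS hLLN hUnif
    rw [Metric.tendstoUniformly_iff]
    intro ε hε
    set M : ℝ := 2 / φ + 4 / (iInf * φ ^ 2) with hM
    have hMpos : 0 < M := by positivity
    set δ : ℝ := min (φ / 4) (ε / (M + 1)) with hδ
    have hδpos : 0 < δ := lt_min (by positivity) (by positivity)
    have hδφ : δ ≤ φ / 4 := min_le_left _ _
    set ε' : ℝ := min (iInf / 2) (δ * (iInf / 2) * iInf) with hε'
    have hε'pos : 0 < ε' := lt_min (by positivity) (by positivity)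
    have hev1 : ∀ᶠ n in atTop, ∀ x ∈ S, dist (piInf x) (piHat n ω x) < ε' := by
      rw [Metric.tendstoUniformlyOn_iff] at hUnif
      exact hUnif ε' hε'pos
    have hev2 : ∀ᶠ n in atTop,
        dist ((∑ i ∈ Finset.range n, A i ω / piInf (X i ω)) / n) φ < δ :=
      hLLN (Metric.ball_mem_nhds φ hδpos)
    filter_upwards [hev1, hev2, eventually_ge_atTop 1] with n h1 h2 hn1 y
    have hnpos : (0:ℝ) < (n:ℝ) := by exact_mod_cast hn1
    -- gap bound between estimated and oracle weights
    have hgap : ∀ i, |A i ω / piHat n ω (X i ω) - A i ω / piInf (X i ω)| ≤ δ := by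
      intro i
      rcases hA01 i ω with h0 | hA1i
      · simp [h0, hδpos.le]
      · have hmem := hS i
        have hd := h1 _ hmem
        rw [Real.dist_eq] at hd
        have hppos : 0 < piHat n ω (X i ω) := (hpiHat01 n ω _).1
        have hip : iInf ≤ piInf (X i ω) := hiInf_le _ hmem
        have hphat : iInf / 2 ≤ piHat n ω (X i ω) := by
          have h5 : |piInf (X i ω) - piHat n ω (X i ω)| < iInf / 2 :=
            lt_of_lt_of_le hd (min_le_left _ _)
          have h6 := abs_lt.mp h5
          linarith [h6.1, h6.2]
        rw [hA1i]
        have heq : 1 / piHat n ω (X i ω) - 1 / piInf (X i ω)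
            = (piInf (X i ω) - piHat n ω (X i ω)) /
              (piHat n ω (X i ω) * piInf (X i ω)) := by
          rw [div_sub_div _ _ (ne_of_gt hppos) (ne_of_gt (hpiInf01 _).1)]
          ring_nf
        rw [heq, abs_div]
        have hdenpos : 0 < piHat n ω (X i ω) * piInf (X i ω) :=
          mul_pos hppos (hpiInf01 _).1
        rw [abs_of_pos hdenpos]
        have hnum : |piInf (X i ω) - piHat n ω (X i ω)| ≤ δ * (iInf / 2) * iInf :=
          le_trans hd.le (min_le_right _ _)
        have hden : (iInf / 2) * iInf ≤ piHat n ω (X i ω) * piInf (X i ω) := by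
          apply mul_le_mul hphat hip hiInf_pos.le (le_trans (by positivity) hphat)
        calc |piInf (X i ω) - piHat n ω (X i ω)| / (piHat n ω (X i ω) * piInf (X i ω))
            ≤ (δ * (iInf / 2) * iInf) / ((iInf / 2) * iInf) :=
              div_le_div₀ (by positivity) hnum (by positivity) hden
          _ = δ := by field_simp
    -- abbreviations
    set u : ℝ := ∑ i ∈ Finset.range n, A i ω / piInf (X i ω) with hu
    set s : ℝ := ∑ i ∈ Finset.range n,
      (if Y i ω ≤ y then A i ω / piHat n ω (X i ω) else 0) with hsdef
    set t : ℝ := ∑ i ∈ Finset.range n,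
      (if Y i ω ≤ y then A i ω / piInf (X i ω) else 0) with htdef
    have hun : |u - n * φ| ≤ n * δ := by
      rw [Real.dist_eq] at h2
      have he : u - n * φ = n * (u / n - φ) := by field_simp
      rw [he, abs_mul, abs_of_pos hnpos]
      exact mul_le_mul_of_nonneg_left h2.le hnpos.le
    have hcu : |C n ω - u| ≤ n * δ := by
      rw [hC, hu, ← Finset.sum_sub_distrib]
      calc |∑ i ∈ Finset.range n,
            (A i ω / piHat n ω (X i ω) - A i ω / piInf (X i ω))|
          ≤ ∑ i ∈ Finset.range n,
            |A i ω / piHat n ω (X i ω) - A i ω / piInf (X i ω)| :=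
            Finset.abs_sum_le_sum_abs _ _
        _ ≤ ∑ _i ∈ Finset.range n, δ := Finset.sum_le_sum (fun i _ => hgap i)
        _ = n * δ := by simp [Finset.sum_const, nsmul_eq_mul]
    have hst : |s - t| ≤ n * δ := by
      rw [hsdef, htdef, ← Finset.sum_sub_distrib]
      calc |∑ i ∈ Finset.range n,
            ((if Y i ω ≤ y then A i ω / piHat n ω (X i ω) else 0) -
             (if Y i ω ≤ y then A i ω / piInf (X i ω) else 0))|
          ≤ ∑ i ∈ Finset.range n,
            |(if Y i ω ≤ y then A i ω / piHat n ω (X i ω) else 0) -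
             (if Y i ω ≤ y then A i ω / piInf (X i ω) else 0)| :=
            Finset.abs_sum_le_sum_abs _ _
        _ ≤ ∑ _i ∈ Finset.range n, δ := by
            refine Finset.sum_le_sum (fun i _ => ?_)
            by_cases hyi : Y i ω ≤ y
            · simp only [if_pos hyi]; exact hgap i
            · simp [if_neg hyi, hδpos.le]
        _ = n * δ := by simp [Finset.sum_const, nsmul_eq_mul]
    have ht0 : 0 ≤ t := by
      rw [htdef]
      refine Finset.sum_nonneg (fun i _ => ?_)
      by_cases hyi : Y i ω ≤ y
      · simp only [if_pos hyi]; exact hVnonneg i ω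
      · simp [if_neg hyi]
    have htle : t ≤ n * iInf⁻¹ := by
      rw [htdef]
      calc (∑ i ∈ Finset.range n, (if Y i ω ≤ y then A i ω / piInf (X i ω) else 0))
          ≤ ∑ _i ∈ Finset.range n, iInf⁻¹ := by
            refine Finset.sum_le_sum (fun i _ => ?_)
            by_cases hyi : Y i ω ≤ y
            · simp only [if_pos hyi]; exact hVbound i ω (hS i)
            · simp only [if_neg hyi]; positivity
        _ = n * iInf⁻¹ := by simp [Finset.sum_const, nsmul_eq_mul]
    have hnδφ : (n:ℝ) * δ ≤ n * (φ / 4) := mul_le_mul_of_nonneg_left hδφ hnpos.le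
    have hClow : n * φ / 2 ≤ C n ω := by
      have h7 := abs_le.mp hun
      have h8 := abs_le.mp hcu
      linarith [h7.1, h8.1]
    have hCpos : 0 < C n ω := lt_of_lt_of_le (by positivity) hClow
    -- main estimate
    rw [Real.dist_eq, zero_sub, abs_neg, hF1tilde]
    have e1 : (C n ω)⁻¹ * s - (φ * n)⁻¹ * t
        = (C n ω)⁻¹ * (s - t) + t * ((C n ω)⁻¹ - (φ * n)⁻¹) := by ring
    have hterm1 : |(C n ω)⁻¹ * (s - t)| ≤ 2 * δ / φ := by
      rw [abs_mul, abs_of_pos (inv_pos.mpr hCpos)]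
      calc (C n ω)⁻¹ * |s - t| ≤ (n * φ / 2)⁻¹ * (n * δ) := by
            apply mul_le_mul (inv_anti₀ (by positivity) hClow) hst
              (abs_nonneg _) (by positivity)
        _ = 2 * δ / φ := by field_simp
    have hterm2 : |t * ((C n ω)⁻¹ - (φ * n)⁻¹)| ≤ 4 * δ / (iInf * φ ^ 2) := by
      rw [abs_mul, abs_of_nonneg ht0]
      have hφn0 : (φ * (n:ℝ)) ≠ 0 := by positivity
      have hdiff : (C n ω)⁻¹ - (φ * n)⁻¹ = (φ * n - C n ω) / (C n ω * (φ * n)) :=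
        inv_sub_inv (ne_of_gt hCpos) hφn0
      rw [hdiff, abs_div, abs_of_pos (by positivity : (0:ℝ) < C n ω * (φ * n))]
      have hnumb : |φ * n - C n ω| ≤ 2 * (n * δ) := by
        have h9 : |φ * n - C n ω| ≤ |φ * n - u| + |u - C n ω| := by
          have : φ * (n:ℝ) - C n ω = (φ * n - u) + (u - C n ω) := by ring
          rw [this]; exact abs_add_le _ _
        have h10 : |φ * (n:ℝ) - u| ≤ n * δ := by rwa [abs_sub_comm, mul_comm (n:ℝ) φ] at hun
        have h11 : |u - C n ω| ≤ n * δ := by rwa [abs_sub_comm] at hcu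
        linarith
      have hprodb : (n * φ / 2) * (φ * n) ≤ C n ω * (φ * n) := by
        apply mul_le_mul_of_nonneg_right hClow (by positivity)
      calc t * (|φ * n - C n ω| / (C n ω * (φ * n)))
          ≤ (n * iInf⁻¹) * ((2 * (n * δ)) / ((n * φ / 2) * (φ * n))) := by
            apply mul_le_mul htle
              (div_le_div₀ (by positivity) hnumb (by positivity) hprodb)
              (by positivity) (by positivity)
        _ = 4 * δ / (iInf * φ ^ 2) := by field_simp; ring
    calc |(C n ω)⁻¹ * s - (φ * n)⁻¹ * t|
        ≤ |(C n ω)⁻¹ * (s - t)| + |t * ((C n ω)⁻¹ - (φ * n)⁻¹)| := by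
          rw [e1]; exact abs_add_le _ _
      _ ≤ 2 * δ / φ + 4 * δ / (iInf * φ ^ 2) := add_le_add hterm1 hterm2
      _ = δ * M := by rw [hM]; ring
      _ ≤ (ε / (M + 1)) * M :=
          mul_le_mul_of_nonneg_right (min_le_right _ _) hMpos.le
      _ < ε := by
          rw [div_mul_eq_mul_div, div_lt_iff₀ (by positivity)]
          nlinarith
end

section
/- Under assumption A3 (and P(A=1) > 0), almost surely, the empirical distribution of predicted values F̃_{3a}(y) = n⁻¹ Σ_{i=1}^n 1{ĝ_n(X_i) ≤ y} converges weakly to F_{3a}(y) = P(g_∞(X) ≤ y), and the empirical distribution of residuals G̃(y) = m⁻¹ Σ_{j=1}^n A_j 1{Y_j − ĝ_n(X_j) ≤ y}, with m = Σ_{j=1}^n A_j, converges weakly to G(y) = P(Y − g_∞(X) ≤ y | A = 1). (Lemma 3.) -/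
open MeasureTheory ProbabilityTheory Filter Topology Set
open scoped ENNReal NNReal BoundedContinuousFunction

namespace Lemma3Aux

noncomputable section

/-- finite union of rational open intervals -/
def UL (l : List (ℚ × ℚ)) : Set ℝ := ⋃ p ∈ l, Ioo (p.1 : ℝ) (p.2 : ℝ)

lemma isOpen_UL (l : List (ℚ × ℚ)) : IsOpen (UL l) :=
  isOpen_biUnion fun _ _ => isOpen_Ioo

lemma measurableSet_UL (l : List (ℚ × ℚ)) : MeasurableSet (UL l) :=
  (isOpen_UL l).measurableSet

lemma UL_subset {l : List (ℚ × ℚ)} {G : Set ℝ}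
    (hl : ∀ p ∈ l, Icc (p.1 : ℝ) p.2 ⊆ G) : UL l ⊆ G :=
  iUnion₂_subset fun p hp => Ioo_subset_Icc_self.trans (hl p hp)

lemma exists_thickening_UL {G : Set ℝ} (hG : IsOpen G) {l : List (ℚ × ℚ)}
    (hl : ∀ p ∈ l, Icc (p.1 : ℝ) p.2 ⊆ G) :
    ∃ δ > 0, Metric.thickening δ (UL l) ⊆ G := by
  set S : Set ℝ := ⋃ p ∈ l, Icc (p.1 : ℝ) p.2 with hS
  have hScomp : IsCompact S := (l.finite_toSet).isCompact_biUnion fun p _ => isCompact_Icc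
  have hSG : S ⊆ G := iUnion₂_subset hl
  obtain ⟨δ, δpos, hδ⟩ := hScomp.exists_thickening_subset_open hG hSG
  refine ⟨δ, δpos, le_trans (Metric.thickening_subset_of_subset δ ?_) hδ⟩
  exact iUnion₂_mono fun p _ => Ioo_subset_Icc_self

lemma exists_UL_approx {α : Type*} [MeasurableSpace α] (ρ : Measure α) {pp : ℕ}
    (V : α → ℝ) (Z : α → (Fin pp → ℝ)) {G : Set ℝ} (hG : IsOpen G) {c : ℝ≥0∞}
    (hc : c < ρ (V ⁻¹' G)) :
    ∃ (l : List (ℚ × ℚ)) (m : ℕ), (∀ p ∈ l, Icc (p.1 : ℝ) p.2 ⊆ G) ∧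
      c < ρ (V ⁻¹' UL l ∩ Z ⁻¹' Metric.closedBall 0 m) := by
  set ι := {lm : List (ℚ × ℚ) × ℕ // ∀ p ∈ lm.1, Icc (p.1 : ℝ) p.2 ⊆ G} with hι
  set s : ι → Set α :=
    fun i => V ⁻¹' UL i.1.1 ∩ Z ⁻¹' Metric.closedBall 0 i.1.2 with hs
  have hULapp : ∀ l₁ l₂ : List (ℚ × ℚ), UL l₁ ⊆ UL (l₁ ++ l₂) ∧ UL l₂ ⊆ UL (l₁ ++ l₂) := by
    intro l₁ l₂
    constructor <;> intro x hx <;> simp only [UL, mem_iUnion, exists_prop] at hx ⊢ <;>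
      obtain ⟨p, hp, hxp⟩ := hx <;> exact ⟨p, List.mem_append.mpr (by tauto), hxp⟩
  have hdir : Directed (· ⊆ ·) s := by
    rintro ⟨⟨l₁, m₁⟩, h₁⟩ ⟨⟨l₂, m₂⟩, h₂⟩
    refine ⟨⟨⟨l₁ ++ l₂, max m₁ m₂⟩, ?_⟩, ?_, ?_⟩
    · intro p hp
      rcases List.mem_append.mp hp with h | h
      exacts [h₁ p h, h₂ p h]
    · exact inter_subset_inter (preimage_mono (hULapp l₁ l₂).1)
        (preimage_mono (Metric.closedBall_subset_closedBall (by exact_mod_cast le_max_left m₁ m₂)))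
    · exact inter_subset_inter (preimage_mono (hULapp l₁ l₂).2)
        (preimage_mono (Metric.closedBall_subset_closedBall (by exact_mod_cast le_max_right m₁ m₂)))
  have hUnion : ⋃ i, s i = V ⁻¹' G := by
    apply Subset.antisymm
    · exact iUnion_subset fun i => inter_subset_left.trans (preimage_mono (UL_subset i.2))
    · intro a ha
      rcases Metric.isOpen_iff.mp hG _ ha with ⟨ε, εpos, hball⟩
      obtain ⟨q, hq1, hq2⟩ := exists_rat_btwn (show V a - ε / 2 < V a by linarith)
      obtain ⟨r, hr1, hr2⟩ := exists_rat_btwn (show V a < V a + ε / 2 by linarith)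
      have hIcc : Icc (q : ℝ) r ⊆ G := by
        intro y hy
        apply hball
        rw [Metric.mem_ball, Real.dist_eq, abs_sub_lt_iff]
        constructor <;> [skip; skip] <;>
          · have := hy.1; have := hy.2; linarith
      refine mem_iUnion.mpr ⟨⟨⟨[(q, r)], ⌈‖Z a‖⌉₊⟩, ?_⟩, ?_, ?_⟩
      · intro p hp
        rw [List.mem_singleton] at hp
        subst hp
        exact hIcc
      · show V a ∈ UL [(q, r)]
        simp only [UL, List.mem_singleton, mem_iUnion, exists_prop]
        exact ⟨(q, r), rfl, hq2, hr1⟩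
      · show Z a ∈ Metric.closedBall 0 (⌈‖Z a‖⌉₊ : ℕ)
        rw [Metric.mem_closedBall, dist_zero_right]
        exact le_trans (Nat.le_ceil _) (by norm_num)
  have hiSup := hdir.measure_iUnion (μ := ρ)
  rw [hUnion] at hiSup
  rw [hiSup] at hc
  obtain ⟨i, hi⟩ := lt_iSup_iff.mp hc
  exact ⟨i.1.1, i.1.2, i.2, hi⟩

lemma slln_indicator {Ω E : Type*} [MeasurableSpace Ω] [MeasurableSpace E]
    (μ : Measure Ω) [IsProbabilityMeasure μ]
    (T : ℕ → Ω → E) (hT : ∀ i, Measurable (T i))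
    (hindep : iIndepFun T μ)
    (hident : ∀ i, IdentDistrib (T i) (T 0) μ μ)
    {s : Set E} (hs : MeasurableSet s) :
    ∀ᵐ ω ∂μ, Tendsto
      (fun n : ℕ => (∑ i ∈ Finset.range n, s.indicator (fun _ => (1 : ℝ)) (T i ω)) / n)
      atTop (𝓝 (μ (T 0 ⁻¹' s)).toReal) := by
  have hφ : Measurable (s.indicator (fun _ : E => (1 : ℝ))) := measurable_const.indicator hs
  have h0 : (fun ω => s.indicator (fun _ => (1 : ℝ)) (T 0 ω))
      = (T 0 ⁻¹' s).indicator (fun _ => (1 : ℝ)) := by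
    rfl
  have hint : Integrable (fun ω => s.indicator (fun _ => (1 : ℝ)) (T 0 ω)) μ := by
    rw [h0]
    exact (integrable_const (1 : ℝ)).indicator ((hT 0) hs)
  have hEq : μ[fun ω => s.indicator (fun _ => (1 : ℝ)) (T 0 ω)] = (μ (T 0 ⁻¹' s)).toReal := by
    rw [h0, integral_indicator_const (1 : ℝ) ((hT 0) hs), smul_eq_mul, mul_one]
    rfl
  have := strong_law_ae_real (fun i ω => s.indicator (fun _ => (1 : ℝ)) (T i ω)) hint
    (fun i j hij => (hindep.indepFun hij).comp hφ hφ)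
    (fun i => (hident i).comp hφ)
  rw [hEq] at this
  exact this

def empMeas (s : Finset ℕ) (x : ℕ → ℝ) : Measure ℝ :=
  (s.card : ℝ≥0∞)⁻¹ • ∑ i ∈ s, Measure.dirac (x i)

lemma empMeas_apply {s : Finset ℕ} {x : ℕ → ℝ} {t : Set ℝ} (ht : MeasurableSet t) :
    empMeas s x t = (s.card : ℝ≥0∞)⁻¹ * ∑ i ∈ s, t.indicator 1 (x i) := by
  simp [empMeas, Measure.smul_apply, Measure.finset_sum_apply, Measure.dirac_apply' _ ht,
    smul_eq_mul]

lemma empMeas_isProb {s : Finset ℕ} {x : ℕ → ℝ} (hs : s.Nonempty) :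
    IsProbabilityMeasure (empMeas s x) := by
  constructor
  rw [empMeas_apply MeasurableSet.univ]
  simp only [Set.indicator_univ, Pi.one_apply]
  rw [Finset.sum_const, nsmul_eq_mul, mul_one]
  exact ENNReal.inv_mul_cancel (by exact_mod_cast hs.card_pos.ne') (ENNReal.natCast_ne_top _)

lemma empMeas_toReal {s : Finset ℕ} {x : ℕ → ℝ} {t : Set ℝ} (ht : MeasurableSet t) :
    (empMeas s x t).toReal
      = (s.card : ℝ)⁻¹ * ∑ i ∈ s, t.indicator (fun _ => (1 : ℝ)) (x i) := by
  rw [empMeas_apply ht, ENNReal.toReal_mul, ENNReal.toReal_inv,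
    ENNReal.toReal_sum (fun i _ => by by_cases h : x i ∈ t <;> simp [h])]
  simp only [ENNReal.toReal_natCast]
  congr 1
  refine Finset.sum_congr rfl fun i _ => ?_
  by_cases h : x i ∈ t <;> simp [h]

lemma empMeas_integral {s : Finset ℕ} {x : ℕ → ℝ} (f : ℝ →ᵇ ℝ) :
    ∫ y, f y ∂(empMeas s x) = (s.card : ℝ)⁻¹ * ∑ i ∈ s, f (x i) := by
  rw [empMeas, integral_smul_measure, integral_finset_sum_measure (fun i _ => f.integrable _)]
  simp [integral_dirac, ENNReal.toReal_inv, smul_eq_mul]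

lemma le_liminf_nnreal {u : ℕ → ℝ≥0} {b : ℝ≥0} (hu : ∀ n, u n ≤ 1)
    (h : ∀ c : ℝ≥0, c < b → ∀ᶠ n in atTop, c ≤ u n) : b ≤ Filter.liminf u atTop := by
  refine le_of_forall_lt_imp_le_of_dense fun c hc => ?_
  exact le_liminf_of_le (isCoboundedUnder_ge_of_le atTop (x := 1) hu) (h c hc)

end

end Lemma3Aux

/-- Lemma 3: under A3 (and `P(A=1) > 0`), almost surely, the empirical distribution of
predicted values `F̃_{3a}` converges weakly to `F_{3a}(y) = P(g_∞(X) ≤ y)`, and the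
empirical distribution of residuals `G̃` converges weakly to
`G(y) = P(Y - g_∞(X) ≤ y | A = 1)`.  Weak convergence is expressed through bounded
continuous test functions; integrals against the discrete distributions `F̃_{3a}` and
`G̃` are the corresponding (weighted) averages. -/
theorem lemma3_weak_convergence_F3a_G
    {Ω : Type*} [MeasurableSpace Ω] {p : ℕ} (μ : Measure Ω) [IsProbabilityMeasure μ]
    (X : ℕ → Ω → (Fin p → ℝ)) (A : ℕ → Ω → ℝ) (Y : ℕ → Ω → ℝ)
    (hmeas : ∀ i, Measurable (fun ω => (X i ω, A i ω, Y i ω)))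
    -- (X_i, A_i, Y_i), i ≥ 0, are i.i.d. copies of (X, A, Y) = (X_0, A_0, Y_0)
    (hindep : iIndepFun (fun i ω => (X i ω, A i ω, Y i ω)) μ)
    (hident : ∀ i, IdentDistrib (fun ω => (X i ω, A i ω, Y i ω))
      (fun ω => (X 0 ω, A 0 ω, Y 0 ω)) μ μ)
    (hA01 : ∀ i ω, A i ω = 0 ∨ A i ω = 1)
    (hApos : 0 < μ {ω | A 0 ω = 1})
    (gInf : (Fin p → ℝ) → ℝ) (hgInf : Measurable gInf)
    -- the sequence of random functions ĝ_n, measurable in (ω, x)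
    (gHat : ℕ → Ω → (Fin p → ℝ) → ℝ)
    (hgHatMeas : ∀ n, Measurable (fun q : Ω × (Fin p → ℝ) => gHat n q.1 q.2))
    -- Assumption A3: sup_{x ∈ K} |ĝ_n(x) - g_∞(x)| → 0 a.s., for every compact K
    (hA3 : ∀ᵐ ω ∂μ, ∀ K : Set (Fin p → ℝ), IsCompact K →
      TendstoUniformlyOn (fun n x => gHat n ω x) gInf atTop K) :
    ∀ᵐ ω ∂μ, ∀ f : ℝ → ℝ, Continuous f → (∃ M : ℝ, ∀ t, |f t| ≤ M) →
      -- ∫ f dF̃_{3a} → ∫ f dF_{3a}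
      (Tendsto (fun n : ℕ => (n : ℝ)⁻¹ * ∑ i ∈ Finset.range n, f (gHat n ω (X i ω)))
        atTop (nhds (∫ ω', f (gInf (X 0 ω')) ∂μ))) ∧
      -- ∫ f dG̃ → ∫ f dG, where G̃ has mass 1/m at each residual Y_j - ĝ_n(X_j), A_j = 1
      (Tendsto (fun n : ℕ => (∑ j ∈ Finset.range n, A j ω)⁻¹ *
          ∑ j ∈ Finset.range n, A j ω * f (Y j ω - gHat n ω (X j ω)))
        atTop (nhds (∫ ω', f (Y 0 ω' - gInf (X 0 ω')) ∂(μ[|{ω' | A 0 ω' = 1}])))) := by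
  classical
  have hX : ∀ i, Measurable (X i) := fun i => measurable_fst.comp (hmeas i)
  have hA : ∀ i, Measurable (A i) := fun i =>
    (measurable_fst.comp measurable_snd).comp (hmeas i)
  have hY : ∀ i, Measurable (Y i) := fun i =>
    (measurable_snd.comp measurable_snd).comp (hmeas i)
  set T : ℕ → Ω → (Fin p → ℝ) × ℝ × ℝ := fun i ω => (X i ω, A i ω, Y i ω) with hTdef
  have hT : ∀ i, Measurable (T i) := hmeas
  -- target sets for the SLLN
  set s1 : List (ℚ × ℚ) × ℕ → Set ((Fin p → ℝ) × ℝ × ℝ) :=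
    fun lm => {e | e.1 ∈ Metric.closedBall 0 (lm.2 : ℝ) ∧ gInf e.1 ∈ Lemma3Aux.UL lm.1}
    with hs1def
  have hs1meas : ∀ lm, MeasurableSet (s1 lm) := fun lm =>
    (measurable_fst measurableSet_closedBall).inter
      ((hgInf.comp measurable_fst) (Lemma3Aux.measurableSet_UL lm.1))
  set s2 : List (ℚ × ℚ) × ℕ → Set ((Fin p → ℝ) × ℝ × ℝ) :=
    fun lm => {e | e.2.1 = 1 ∧ e.1 ∈ Metric.closedBall 0 (lm.2 : ℝ) ∧
      e.2.2 - gInf e.1 ∈ Lemma3Aux.UL lm.1} with hs2def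
  have hs2meas : ∀ lm, MeasurableSet (s2 lm) := fun lm =>
    ((measurable_fst.comp measurable_snd) (measurableSet_singleton 1)).inter
      (((measurable_fst measurableSet_closedBall)).inter
        (((measurable_snd.comp measurable_snd).sub (hgInf.comp measurable_fst))
          (Lemma3Aux.measurableSet_UL lm.1)))
  set sA : Set ((Fin p → ℝ) × ℝ × ℝ) := {e | e.2.1 = 1} with hsAdef
  have hsAmeas : MeasurableSet sA :=
    (measurable_fst.comp measurable_snd) (measurableSet_singleton 1)
  -- strong law events
  have hS1 : ∀ᵐ ω ∂μ, ∀ lm : List (ℚ × ℚ) × ℕ,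
      Tendsto (fun n : ℕ =>
          (∑ i ∈ Finset.range n, (s1 lm).indicator (fun _ => (1 : ℝ)) (T i ω)) / n)
        atTop (𝓝 (μ (T 0 ⁻¹' s1 lm)).toReal) := by
    rw [ae_all_iff]
    intro lm
    exact Lemma3Aux.slln_indicator μ T hT hindep hident (hs1meas lm)
  have hS2 : ∀ᵐ ω ∂μ, ∀ lm : List (ℚ × ℚ) × ℕ,
      Tendsto (fun n : ℕ =>
          (∑ i ∈ Finset.range n, (s2 lm).indicator (fun _ => (1 : ℝ)) (T i ω)) / n)
        atTop (𝓝 (μ (T 0 ⁻¹' s2 lm)).toReal) := by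
    rw [ae_all_iff]
    intro lm
    exact Lemma3Aux.slln_indicator μ T hT hindep hident (hs2meas lm)
  have hSA : ∀ᵐ ω ∂μ,
      Tendsto (fun n : ℕ =>
          (∑ i ∈ Finset.range n, sA.indicator (fun _ => (1 : ℝ)) (T i ω)) / n)
        atTop (𝓝 (μ (T 0 ⁻¹' sA)).toReal) :=
    Lemma3Aux.slln_indicator μ T hT hindep hident hsAmeas
  -- conditional measure setup
  set Sset : Set Ω := {ω' | A 0 ω' = 1} with hSsetdef
  have hSmeas : MeasurableSet Sset := (hA 0) (measurableSet_singleton 1)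
  have hμS0 : μ Sset ≠ 0 := hApos.ne'
  have hTS : T 0 ⁻¹' sA = Sset := rfl
  haveI hcondprob : IsProbabilityMeasure (μ[|Sset]) := cond_isProbabilityMeasure hμS0
  set aR : ℝ := (μ Sset).toReal with haRdef
  have haRpos : 0 < aR := ENNReal.toReal_pos hμS0 (measure_ne_top _ _)
  filter_upwards [hA3, hS1, hS2, hSA] with ω hω3 hω1 hω2 hωA
  intro f hf hfb
  obtain ⟨M, hMb⟩ := hfb
  set F : ℝ →ᵇ ℝ := BoundedContinuousFunction.ofNormedAddCommGroup f hf M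
    (fun t => by rw [Real.norm_eq_abs]; exact hMb t) with hFdef
  have hFapp : ∀ t, F t = f t := fun t => rfl
  rw [hTS] at hωA
  -- Part 1 --
  have part1 : Tendsto (fun n : ℕ => (n : ℝ)⁻¹ * ∑ i ∈ Finset.range n,
      f (gHat n ω (X i ω))) atTop (𝓝 (∫ ω', f (gInf (X 0 ω')) ∂μ)) := by
    have hXGm : Measurable (fun ω' => gInf (X 0 ω')) := hgInf.comp (hX 0)
    haveI hν₁prob : IsProbabilityMeasure (μ.map (fun ω' => gInf (X 0 ω'))) :=
      Measure.isProbabilityMeasure_map hXGm.aemeasurable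
    set ν₁ : ProbabilityMeasure ℝ := ⟨μ.map (fun ω' => gInf (X 0 ω')), hν₁prob⟩ with hν₁def
    set P : ℕ → ProbabilityMeasure ℝ := fun n =>
      ⟨Lemma3Aux.empMeas (Finset.range (n + 1)) (fun i => gHat (n + 1) ω (X i ω)),
        Lemma3Aux.empMeas_isProb (Finset.nonempty_range_iff.mpr (Nat.succ_ne_zero n))⟩
      with hPdef
    have hPlim : Tendsto P atTop (𝓝 ν₁) := by
      apply MeasureTheory.tendsto_of_forall_isOpen_le_liminf
      intro G hG
      apply Lemma3Aux.le_liminf_nnreal (fun n => (P n).apply_le_one G)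
      intro c hc
      have hν₁G : (ν₁ : Measure ℝ) G = μ ((fun ω' => gInf (X 0 ω')) ⁻¹' G) :=
        Measure.map_apply hXGm hG.measurableSet
      have hc' : (c : ℝ≥0∞) < μ ((fun ω' => gInf (X 0 ω')) ⁻¹' G) := by
        rw [← hν₁G]
        have h2 := ENNReal.coe_lt_coe.mpr hc
        rwa [ProbabilityMeasure.ennreal_coeFn_eq_coeFn_toMeasure] at h2
      obtain ⟨l, m, hlG, hlm⟩ := Lemma3Aux.exists_UL_approx μ _ (X 0) hG hc'
      obtain ⟨δ, δpos, hδG⟩ := Lemma3Aux.exists_thickening_UL hG hlG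
      have hset : (fun ω' => gInf (X 0 ω')) ⁻¹' Lemma3Aux.UL l ∩
          X 0 ⁻¹' Metric.closedBall 0 (m : ℝ) = T 0 ⁻¹' s1 (l, m) := by
        ext ω'
        simp only [hs1def, Set.mem_inter_iff, Set.mem_preimage, Set.mem_setOf_eq]
        tauto
      rw [hset] at hlm
      have hL := hω1 (l, m)
      have hcL : (c : ℝ) < (μ (T 0 ⁻¹' s1 (l, m))).toReal := by
        have h3 := ENNReal.toReal_strict_mono (measure_ne_top μ _) hlm
        simpa using h3
      have hunif := Metric.tendstoUniformlyOn_iff.mp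
        (hω3 (Metric.closedBall 0 (m : ℝ)) (isCompact_closedBall 0 (m : ℝ))) δ δpos
      have hev : ∀ᶠ n in atTop, (c : ℝ) <
          (∑ i ∈ Finset.range n, (s1 (l, m)).indicator (fun _ => (1 : ℝ)) (T i ω)) / n :=
        hL.eventually (eventually_gt_nhds hcL)
      filter_upwards [(tendsto_add_atTop_nat 1).eventually hunif,
        (tendsto_add_atTop_nat 1).eventually hev] with n hu he
      have hkey : (c : ℝ) ≤ ((P n : Measure ℝ) G).toReal := by
        have happly : ((P n : Measure ℝ) G).toReal = ((Finset.range (n + 1)).card : ℝ)⁻¹ *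
            ∑ i ∈ Finset.range (n + 1),
              G.indicator (fun _ => (1 : ℝ)) (gHat (n + 1) ω (X i ω)) :=
          Lemma3Aux.empMeas_toReal hG.measurableSet
        rw [happly, Finset.card_range]
        have hpt : ∀ i ∈ Finset.range (n + 1),
            (s1 (l, m)).indicator (fun _ => (1 : ℝ)) (T i ω) ≤
              G.indicator (fun _ => (1 : ℝ)) (gHat (n + 1) ω (X i ω)) := by
          intro i _
          by_cases hi : T i ω ∈ s1 (l, m)
          · have h1' : X i ω ∈ Metric.closedBall 0 (m : ℝ) := hi.1
            have h2' : gInf (X i ω) ∈ Lemma3Aux.UL l := hi.2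
            have hmem : gHat (n + 1) ω (X i ω) ∈ G := by
              apply hδG
              rw [Metric.mem_thickening_iff]
              exact ⟨gInf (X i ω), h2', by rw [dist_comm]; exact hu _ h1'⟩
            rw [Set.indicator_of_mem hi, Set.indicator_of_mem hmem]
          · rw [Set.indicator_of_notMem hi]
            exact Set.indicator_nonneg (fun _ _ => zero_le_one) _
        calc (c : ℝ) ≤ (∑ i ∈ Finset.range (n + 1),
              (s1 (l, m)).indicator (fun _ => (1 : ℝ)) (T i ω)) / ((n + 1 : ℕ) : ℝ) :=
            le_of_lt he
          _ ≤ (∑ i ∈ Finset.range (n + 1),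
              G.indicator (fun _ => (1 : ℝ)) (gHat (n + 1) ω (X i ω))) / ((n + 1 : ℕ) : ℝ) := by
            gcongr with i hi
            exact hpt i hi
          _ = ((n + 1 : ℕ) : ℝ)⁻¹ * ∑ i ∈ Finset.range (n + 1),
              G.indicator (fun _ => (1 : ℝ)) (gHat (n + 1) ω (X i ω)) := div_eq_inv_mul _ _
      have hfin : (P n : Measure ℝ) G ≠ ⊤ := measure_ne_top _ _
      rw [← ENNReal.coe_le_coe, ProbabilityMeasure.ennreal_coeFn_eq_coeFn_toMeasure]
      exact (ENNReal.toReal_le_toReal ENNReal.coe_ne_top hfin).mp (by simpa using hkey)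
    have hi1 := ProbabilityMeasure.tendsto_iff_forall_integral_tendsto.mp hPlim F
    have hiν : ∫ y, F y ∂(ν₁ : Measure ℝ) = ∫ ω', f (gInf (X 0 ω')) ∂μ := by
      show ∫ y, F y ∂(μ.map (fun ω' => gInf (X 0 ω'))) = _
      rw [integral_map hXGm.aemeasurable F.continuous.aestronglyMeasurable]
      rfl
    rw [hiν] at hi1
    rw [← tendsto_add_atTop_iff_nat 1]
    refine hi1.congr fun n => ?_
    show ∫ y, F y ∂(Lemma3Aux.empMeas (Finset.range (n + 1))
        (fun i => gHat (n + 1) ω (X i ω))) = _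
    rw [Lemma3Aux.empMeas_integral F, Finset.card_range]
    simp only [hFapp]
  refine ⟨part1, ?_⟩
  -- Part 2 --
  have hV : Measurable (fun ω' => Y 0 ω' - gInf (X 0 ω')) := (hY 0).sub (hgInf.comp (hX 0))
  haveI hν₂prob : IsProbabilityMeasure ((μ[|Sset]).map (fun ω' => Y 0 ω' - gInf (X 0 ω'))) :=
    Measure.isProbabilityMeasure_map hV.aemeasurable
  set ν₂ : ProbabilityMeasure ℝ :=
    ⟨(μ[|Sset]).map (fun ω' => Y 0 ω' - gInf (X 0 ω')), hν₂prob⟩ with hν₂def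
  set F2 : ℕ → Finset ℕ := fun n => (Finset.range n).filter (fun j => A j ω = 1) with hF2def
  have hindA : ∀ j, sA.indicator (fun _ => (1 : ℝ)) (T j ω) = if A j ω = 1 then 1 else 0 := by
    intro j
    by_cases h : A j ω = 1
    · rw [if_pos h, Set.indicator_of_mem (show T j ω ∈ sA from h)]
    · rw [Set.indicator_of_notMem (show T j ω ∉ sA from h), if_neg h]
  have hcardF2 : ∀ n, ((F2 n).card : ℝ) =
      ∑ i ∈ Finset.range n, sA.indicator (fun _ => (1 : ℝ)) (T i ω) := by
    intro n
    rw [hF2def, Finset.card_filter]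
    push_cast
    exact Finset.sum_congr rfl fun j _ => (hindA j).symm
  have hsumA : ∀ n, (∑ j ∈ Finset.range n, A j ω) = ((F2 n).card : ℝ) := by
    intro n
    rw [hcardF2 n]
    refine Finset.sum_congr rfl fun j _ => ?_
    rw [hindA j]
    rcases hA01 j ω with h | h <;> simp [h]
  have hsumAg : ∀ (n : ℕ) (g : ℕ → ℝ),
      (∑ j ∈ Finset.range n, A j ω * g j) = ∑ j ∈ F2 n, g j := by
    intro n g
    rw [hF2def, Finset.sum_filter]
    refine Finset.sum_congr rfl fun j _ => ?_
    rcases hA01 j ω with h | h <;> simp [h]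
  have hcard : Tendsto (fun n : ℕ => ((F2 n).card : ℝ) / n) atTop (𝓝 aR) := by
    refine hωA.congr fun n => ?_
    rw [hcardF2 n]
  have hevNE : ∀ᶠ n in atTop, (F2 n).Nonempty := by
    have h0 : ∀ᶠ n in atTop, 0 < ((F2 n).card : ℝ) / n :=
      hcard.eventually (eventually_gt_nhds haRpos)
    filter_upwards [h0] with n hn
    have hcne : (F2 n).card ≠ 0 := by
      intro hcz
      rw [hcz] at hn
      simp at hn
    exact Finset.card_pos.mp (Nat.pos_of_ne_zero hcne)
  set Q : ℕ → ProbabilityMeasure ℝ := fun n =>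
    if h : (F2 (n + 1)).Nonempty then
      ⟨Lemma3Aux.empMeas (F2 (n + 1)) (fun j => Y j ω - gHat (n + 1) ω (X j ω)),
        Lemma3Aux.empMeas_isProb h⟩
    else ⟨Measure.dirac 0, inferInstance⟩ with hQdef
  have hQlim : Tendsto Q atTop (𝓝 ν₂) := by
    apply MeasureTheory.tendsto_of_forall_isOpen_le_liminf
    intro G hG
    apply Lemma3Aux.le_liminf_nnreal (fun n => (Q n).apply_le_one G)
    intro c hc
    have hν₂G : (ν₂ : Measure ℝ) G =
        (μ Sset)⁻¹ * μ (Sset ∩ (fun ω' => Y 0 ω' - gInf (X 0 ω')) ⁻¹' G) := by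
      show ((μ[|Sset]).map (fun ω' => Y 0 ω' - gInf (X 0 ω'))) G = _
      rw [Measure.map_apply hV hG.measurableSet, cond_apply hSmeas]
    have hc1 : (c : ℝ≥0∞) <
        (μ Sset)⁻¹ * μ (Sset ∩ (fun ω' => Y 0 ω' - gInf (X 0 ω')) ⁻¹' G) := by
      rw [← hν₂G]
      have h2 := ENNReal.coe_lt_coe.mpr hc
      rwa [ProbabilityMeasure.ennreal_coeFn_eq_coeFn_toMeasure] at h2
    have hc2 : (c : ℝ≥0∞) * μ Sset <
        μ (Sset ∩ (fun ω' => Y 0 ω' - gInf (X 0 ω')) ⁻¹' G) := by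
      by_contra hcon
      push_neg at hcon
      have h4 : (μ Sset)⁻¹ * μ (Sset ∩ (fun ω' => Y 0 ω' - gInf (X 0 ω')) ⁻¹' G) ≤
          (μ Sset)⁻¹ * ((c : ℝ≥0∞) * μ Sset) := mul_le_mul_right hcon _
      rw [mul_comm (c : ℝ≥0∞) (μ Sset), ← mul_assoc,
        ENNReal.inv_mul_cancel hμS0 (measure_ne_top μ _), one_mul] at h4
      exact absurd (lt_of_lt_of_le hc1 h4) (lt_irrefl _)
    have hρ : (μ.restrict Sset) ((fun ω' => Y 0 ω' - gInf (X 0 ω')) ⁻¹' G) =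
        μ (Sset ∩ (fun ω' => Y 0 ω' - gInf (X 0 ω')) ⁻¹' G) := by
      rw [Measure.restrict_apply (hV hG.measurableSet), inter_comm]
    obtain ⟨l, m, hlG, hlm⟩ := Lemma3Aux.exists_UL_approx (μ.restrict Sset)
      (fun ω' => Y 0 ω' - gInf (X 0 ω')) (X 0) hG (by rw [hρ]; exact hc2)
    obtain ⟨δ, δpos, hδG⟩ := Lemma3Aux.exists_thickening_UL hG hlG
    have hset2 : Sset ∩ ((fun ω' => Y 0 ω' - gInf (X 0 ω')) ⁻¹' Lemma3Aux.UL l ∩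
        X 0 ⁻¹' Metric.closedBall 0 (m : ℝ)) = T 0 ⁻¹' s2 (l, m) := by
      ext ω'
      simp only [hs2def, hSsetdef, Set.mem_inter_iff, Set.mem_preimage, Set.mem_setOf_eq]
      tauto
    rw [Measure.restrict_apply ((hV (Lemma3Aux.measurableSet_UL l)).inter
      ((hX 0) measurableSet_closedBall)), inter_comm, hset2] at hlm
    have hcL2 : (c : ℝ) * aR < (μ (T 0 ⁻¹' s2 (l, m))).toReal := by
      have h3 := ENNReal.toReal_strict_mono (measure_ne_top μ _) hlm
      rwa [ENNReal.toReal_mul, ENNReal.coe_toReal] at h3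
    have hcL2' : (c : ℝ) < (μ (T 0 ⁻¹' s2 (l, m))).toReal / aR :=
      (lt_div_iff₀ haRpos).mpr hcL2
    have hL2 := hω2 (l, m)
    have hratio : Tendsto (fun n : ℕ =>
        (∑ i ∈ Finset.range n, (s2 (l, m)).indicator (fun _ => (1 : ℝ)) (T i ω)) /
          ((F2 n).card : ℝ)) atTop (𝓝 ((μ (T 0 ⁻¹' s2 (l, m))).toReal / aR)) := by
      have h := hL2.div hcard haRpos.ne'
      refine Tendsto.congr' ?_ h
      filter_upwards [eventually_ge_atTop 1] with n hn
      have hn' : (n : ℝ) ≠ 0 := Nat.cast_ne_zero.mpr (by omega)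
      by_cases hc0 : ((F2 n).card : ℝ) = 0
      · simp [hc0]
      · simp only [Pi.div_apply]
        field_simp
    have hev2 : ∀ᶠ n in atTop, (c : ℝ) <
        (∑ i ∈ Finset.range n, (s2 (l, m)).indicator (fun _ => (1 : ℝ)) (T i ω)) /
          ((F2 n).card : ℝ) := hratio.eventually (eventually_gt_nhds hcL2')
    have hunif2 := Metric.tendstoUniformlyOn_iff.mp
      (hω3 (Metric.closedBall 0 (m : ℝ)) (isCompact_closedBall 0 (m : ℝ))) δ δpos
    filter_upwards [(tendsto_add_atTop_nat 1).eventually hunif2,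
      (tendsto_add_atTop_nat 1).eventually hev2,
      (tendsto_add_atTop_nat 1).eventually hevNE] with n hu he hne
    have hQn : (Q n : Measure ℝ) = Lemma3Aux.empMeas (F2 (n + 1))
        (fun j => Y j ω - gHat (n + 1) ω (X j ω)) := by
      rw [hQdef]
      simp only [dif_pos hne]
      exact congrArg ProbabilityMeasure.toMeasure (dif_pos hne)
    have hsum2 : (∑ j ∈ F2 (n + 1), (s2 (l, m)).indicator (fun _ => (1 : ℝ)) (T j ω)) =
        ∑ j ∈ Finset.range (n + 1), (s2 (l, m)).indicator (fun _ => (1 : ℝ)) (T j ω) := by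
      rw [hF2def]
      refine Finset.sum_filter_of_ne fun j _ hj => ?_
      by_contra hAj
      apply hj
      apply Set.indicator_of_notMem
      intro hmem
      exact hAj hmem.1
    have hkey : (c : ℝ) ≤ ((Q n : Measure ℝ) G).toReal := by
      rw [hQn, Lemma3Aux.empMeas_toReal hG.measurableSet]
      have hpt : ∀ j ∈ F2 (n + 1),
          (s2 (l, m)).indicator (fun _ => (1 : ℝ)) (T j ω) ≤
            G.indicator (fun _ => (1 : ℝ)) (Y j ω - gHat (n + 1) ω (X j ω)) := by
        intro j _
        by_cases hj : T j ω ∈ s2 (l, m)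
        · have hK : X j ω ∈ Metric.closedBall 0 (m : ℝ) := hj.2.1
          have hU : Y j ω - gInf (X j ω) ∈ Lemma3Aux.UL l := hj.2.2
          have hmem : Y j ω - gHat (n + 1) ω (X j ω) ∈ G := by
            apply hδG
            rw [Metric.mem_thickening_iff]
            refine ⟨Y j ω - gInf (X j ω), hU, ?_⟩
            have hd := hu (X j ω) hK
            rw [Real.dist_eq] at hd ⊢
            have : Y j ω - gHat (n + 1) ω (X j ω) - (Y j ω - gInf (X j ω)) =
                gInf (X j ω) - gHat (n + 1) ω (X j ω) := by ring
            rw [this]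
            exact hd
          rw [Set.indicator_of_mem hj, Set.indicator_of_mem hmem]
        · rw [Set.indicator_of_notMem hj]
          exact Set.indicator_nonneg (fun _ _ => zero_le_one) _
      calc (c : ℝ) ≤ (∑ i ∈ Finset.range (n + 1),
            (s2 (l, m)).indicator (fun _ => (1 : ℝ)) (T i ω)) / ((F2 (n + 1)).card : ℝ) :=
          le_of_lt he
        _ = (∑ j ∈ F2 (n + 1), (s2 (l, m)).indicator (fun _ => (1 : ℝ)) (T j ω)) /
            ((F2 (n + 1)).card : ℝ) := by rw [hsum2]
        _ ≤ (∑ j ∈ F2 (n + 1),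
            G.indicator (fun _ => (1 : ℝ)) (Y j ω - gHat (n + 1) ω (X j ω))) /
            ((F2 (n + 1)).card : ℝ) := by
          gcongr with i hi
          exact hpt i hi
        _ = ((F2 (n + 1)).card : ℝ)⁻¹ * ∑ j ∈ F2 (n + 1),
            G.indicator (fun _ => (1 : ℝ)) (Y j ω - gHat (n + 1) ω (X j ω)) :=
          div_eq_inv_mul _ _
    have hfin : (Q n : Measure ℝ) G ≠ ⊤ := measure_ne_top _ _
    rw [← ENNReal.coe_le_coe, ProbabilityMeasure.ennreal_coeFn_eq_coeFn_toMeasure]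
    exact (ENNReal.toReal_le_toReal ENNReal.coe_ne_top hfin).mp (by simpa using hkey)
  have hi2 := ProbabilityMeasure.tendsto_iff_forall_integral_tendsto.mp hQlim F
  have hiν₂ : ∫ y, F y ∂(ν₂ : Measure ℝ) =
      ∫ ω', f (Y 0 ω' - gInf (X 0 ω')) ∂(μ[|Sset]) := by
    show ∫ y, F y ∂((μ[|Sset]).map (fun ω' => Y 0 ω' - gInf (X 0 ω'))) = _
    rw [integral_map hV.aemeasurable F.continuous.aestronglyMeasurable]
    rfl
  rw [hiν₂] at hi2
  rw [← tendsto_add_atTop_iff_nat 1]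
  refine Tendsto.congr' ?_ hi2
  filter_upwards [(tendsto_add_atTop_nat 1).eventually hevNE] with n hne
  have hQn : (Q n : Measure ℝ) = Lemma3Aux.empMeas (F2 (n + 1))
      (fun j => Y j ω - gHat (n + 1) ω (X j ω)) := by
    rw [hQdef]
    simp only [dif_pos hne]
    exact congrArg ProbabilityMeasure.toMeasure (dif_pos hne)
  show ∫ y, F y ∂(Q n : Measure ℝ) = _
  rw [hQn, Lemma3Aux.empMeas_integral F, hsumA (n + 1),
    hsumAg (n + 1) (fun j => f (Y j ω - gHat (n + 1) ω (X j ω)))]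
  simp only [hFapp]
end

section
/- Let F: ℝ → [0,1] be a cumulative distribution function and p ∈ (0,1) such that there is a unique y_p ∈ ℝ with F(y_p) = p, so T_p(F) = y_p. Let F_n: ℝ → ℝ, n ≥ 1, be functions such that (1) lim_{y→−∞} F_n(y) = 0 and lim_{y→+∞} F_n(y) = 1 for each n, and (2) F_n converges to F uniformly on ℝ. Then for each n the set {y : F_n(y) ≥ p} is nonempty and bounded below, so T_p(F_n) = inf{y : F_n(y) ≥ p} is well defined, and lim_{n→∞} T_p(F_n) = T_p(F). (Lemma 4.) -/
open MeasureTheory Filter Topology Set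

/-- Lemma 4: let `F` be a cumulative distribution function and `p ∈ (0,1)` with a unique
`y_p` such that `F y_p = p`, so that `T_p(F) = inf {y | F y ≥ p} = y_p`.  If
`F_n : ℝ → ℝ` satisfy `F_n → 0` at `-∞`, `F_n → 1` at `+∞`, and `F_n → F` uniformly on
`ℝ`, then each set `{y | F_n y ≥ p}` is nonempty and bounded below (so
`T_p(F_n) = inf {y | F_n y ≥ p}` is well defined) and `T_p(F_n) → T_p(F) = y_p`. -/
theorem lemma4_quantile_continuity
    (F : ℝ → ℝ)
    -- F is a cumulative distribution function
    (hmono : Monotone F)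
    (hrightcont : ∀ y, ContinuousWithinAt F (Set.Ici y) y)
    (hrange : ∀ y, F y ∈ Set.Icc (0:ℝ) 1)
    (hFbot : Tendsto F atBot (nhds 0))
    (hFtop : Tendsto F atTop (nhds 1))
    (p : ℝ) (hp : p ∈ Set.Ioo (0:ℝ) 1)
    -- y_p is the unique solution of F(y) = p
    (yp : ℝ) (hyp : F yp = p) (huniq : ∀ z, F z = p → z = yp)
    (Fn : ℕ → ℝ → ℝ)
    -- (1) each F_n has limits 0 at -∞ and 1 at +∞
    (hFnbot : ∀ n, Tendsto (Fn n) atBot (nhds 0))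
    (hFntop : ∀ n, Tendsto (Fn n) atTop (nhds 1))
    -- (2) F_n converges to F uniformly on ℝ
    (hunif : TendstoUniformly Fn F atTop) :
    (∀ n, ({y | p ≤ Fn n y}).Nonempty ∧ BddBelow {y | p ≤ Fn n y}) ∧
    sInf {y | p ≤ F y} = yp ∧
    Tendsto (fun n => sInf {y | p ≤ Fn n y}) atTop (nhds yp) := by
  obtain ⟨hp0, hp1⟩ := hp
  -- F z < p for z < yp, F z > p for z > yp
  have hFlt : ∀ z, z < yp → F z < p := by
    intro z hz
    refine lt_of_le_of_ne (hyp ▸ hmono hz.le) fun h => absurd (huniq z h) hz.ne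
  have hFgt : ∀ z, yp < z → p < F z := by
    intro z hz
    refine lt_of_le_of_ne (hyp ▸ hmono hz.le) fun h => absurd (huniq z h.symm) hz.ne'
  -- part 1
  have hpart1 : ∀ n, ({y | p ≤ Fn n y}).Nonempty ∧ BddBelow {y | p ≤ Fn n y} := by
    intro n
    constructor
    · obtain ⟨y, hy⟩ := ((hFntop n).eventually (eventually_gt_nhds hp1)).exists
      exact ⟨y, hy.le⟩
    · have h := (hFnbot n).eventually (eventually_lt_nhds hp0)
      rw [eventually_atBot] at h
      obtain ⟨M, hM⟩ := h
      refine ⟨M, fun y hy => ?_⟩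
      by_contra hlt
      push_neg at hlt
      exact absurd hy (not_le.mpr (hM y hlt.le))
  refine ⟨hpart1, ?_, ?_⟩
  · apply le_antisymm
    · refine csInf_le ⟨yp, fun y hy => ?_⟩ (by simp [Set.mem_setOf_eq, hyp])
      by_contra h
      push_neg at h
      exact absurd hy (not_le.mpr (hFlt y h))
    · refine le_csInf ⟨yp, by simp [hyp]⟩ fun y hy => ?_
      by_contra h
      push_neg at h
      exact absurd hy (not_le.mpr (hFlt y h))
  · rw [Metric.tendsto_atTop]
    intro ε hε
    set e := ε / 2 with he
    have he0 : 0 < e := by positivity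
    have h1 : p < F (yp + e) := hFgt _ (by linarith)
    have h2 : F (yp - e) < p := hFlt _ (by linarith)
    set δ := min (F (yp + e) - p) (p - F (yp - e)) with hδ
    have hδ0 : 0 < δ := lt_min (by linarith) (by linarith)
    have hU := (Metric.tendstoUniformly_iff.mp hunif) δ hδ0
    rw [eventually_atTop] at hU
    obtain ⟨N, hN⟩ := hU
    refine ⟨N, fun n hn => ?_⟩
    have hclose : ∀ x, |F x - Fn n x| < δ := by
      intro x
      have := hN n hn x
      rwa [Real.dist_eq] at this
    -- upper bound: yp + e ∈ S n
    have hmem : yp + e ∈ {y | p ≤ Fn n y} := by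
      have := hclose (yp + e)
      have := abs_lt.mp this
      have hδ1 : δ ≤ F (yp + e) - p := min_le_left _ _
      simp only [Set.mem_setOf_eq]
      linarith
    have hub : sInf {y | p ≤ Fn n y} ≤ yp + e := csInf_le (hpart1 n).2 hmem
    -- lower bound: every member is > yp - e
    have hlb : yp - e ≤ sInf {y | p ≤ Fn n y} := by
      refine le_csInf (hpart1 n).1 fun y hy => ?_
      by_contra h
      push_neg at h
      have hFy : F y ≤ F (yp - e) := hmono h.le
      have := abs_lt.mp (hclose y)
      have hδ2 : δ ≤ p - F (yp - e) := min_le_right _ _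
      have : p ≤ Fn n y := hy
      linarith
    rw [Real.dist_eq, abs_lt]
    constructor <;> linarith
end

section
/- Doubly protected representation with correct outcome regression: under the MAR assumption P(A = 1 | X, Y) = P(A = 1 | X) almost surely, let g_y(X) be a version of the conditional probability P(Y ≤ y | X), and let q: ℝ^p → (0, 1] be any measurable function with q(X) ≥ c for some constant c > 0 almost surely. Then for every y ∈ ℝ, F_Y(y) = E[ A 1{Y ≤ y} / q(X) ] − E[ (A/q(X) − 1) g_y(X) ]. -/
open MeasureTheory ProbabilityTheory Filter Topology Set

/-- Pull-out lemma: for `f` `m`-strongly-measurable and a.e. bounded, and `g` integrable,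
`∫ f g = ∫ f · E[g|m]`. -/
lemma integral_mul_eq_integral_mul_condexp {Ω : Type*} {m m0 : MeasurableSpace Ω}
    (hm : m ≤ m0) (μ : Measure Ω) [IsFiniteMeasure μ] {f g : Ω → ℝ}
    (hf : StronglyMeasurable[m] f) {c : ℝ} (hfb : ∀ᵐ ω ∂μ, ‖f ω‖ ≤ c)
    (hg : Integrable g μ) :
    ∫ ω, f ω * g ω ∂μ = ∫ ω, f ω * (μ[g|m]) ω ∂μ := by
  have h1 : Integrable (fun ω => f ω * g ω) μ :=
    hg.bdd_mul ((hf.mono hm).aestronglyMeasurable) hfb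
  have h2 := condExp_stronglyMeasurable_mul_of_bound hm hf hg c hfb
  calc ∫ ω, f ω * g ω ∂μ = ∫ ω, (μ[(fun ω => f ω * g ω)|m]) ω ∂μ :=
        (integral_condExp hm).symm
    _ = ∫ ω, f ω * (μ[g|m]) ω ∂μ := integral_congr_ae h2

/-- Doubly protected representation with correct outcome regression: under MAR, if
`g_y(X)` is a version of `P(Y ≤ y | X)` and `q : ℝ^p → (0,1]` is measurable with
`q(X) ≥ c > 0` a.s., then for every `y`,
`F_Y(y) = E[A 1{Y ≤ y}/q(X)] - E[(A/q(X) - 1) g_y(X)]`. -/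
theorem doubly_protected_correct_regression
    {Ω : Type*} [MeasurableSpace Ω] {p : ℕ} (μ : Measure Ω) [IsProbabilityMeasure μ]
    (X : Ω → (Fin p → ℝ)) (A : Ω → ℝ) (Y : Ω → ℝ)
    (hX : Measurable X) (hA : Measurable A) (hY : Measurable Y)
    (hA01 : ∀ ω, A ω = 0 ∨ A ω = 1)
    -- MAR: P(A = 1 | X, Y) = P(A = 1 | X) almost surely
    (hMAR : μ[A | MeasurableSpace.comap (fun ω => (X ω, Y ω)) inferInstance] =ᵐ[μ]
      μ[A | MeasurableSpace.comap X inferInstance])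
    -- g_y(X) is, for each y, a version of the conditional probability P(Y ≤ y | X)
    (gy : ℝ → (Fin p → ℝ) → ℝ) (hgy : ∀ y, Measurable (gy y))
    (hgyver : ∀ y : ℝ,
      μ[(fun ω => if Y ω ≤ y then (1:ℝ) else 0) |
          MeasurableSpace.comap X inferInstance] =ᵐ[μ] fun ω => gy y (X ω))
    -- q : ℝ^p → (0,1] is measurable, bounded below on X by a positive constant a.s.
    (q : (Fin p → ℝ) → ℝ) (hq : Measurable q)
    (hq01 : ∀ x, q x ∈ Set.Ioc (0:ℝ) 1)
    (hlower : ∃ c : ℝ, 0 < c ∧ ∀ᵐ ω ∂μ, c ≤ q (X ω)) :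
    ∀ y : ℝ,
      (μ {ω | Y ω ≤ y}).toReal =
        (∫ ω, (if Y ω ≤ y then A ω / q (X ω) else 0) ∂μ)
        - (∫ ω, (A ω / q (X ω) - 1) * gy y (X ω) ∂μ) := by
  rename_i m0 instP
  intro y
  obtain ⟨c, hc, hcq⟩ := hlower
  have hmX : MeasurableSpace.comap X inferInstance ≤ m0 :=
    hX.comap_le
  have hmXY : MeasurableSpace.comap (fun ω => (X ω, Y ω)) inferInstance
      ≤ m0 := (hX.prodMk hY).comap_le
  set mX : MeasurableSpace Ω := MeasurableSpace.comap X inferInstance with hmXdef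
  set mXY : MeasurableSpace Ω :=
    MeasurableSpace.comap (fun ω => (X ω, Y ω)) inferInstance with hmXYdef
  have hmXle : mX ≤ mXY := by
    intro s hs
    obtain ⟨t, ht, rfl⟩ := hs
    exact ⟨Prod.fst ⁻¹' t, measurable_fst ht, rfl⟩
  -- basic measurabilities
  have hXmX : Measurable[mX] X := Measurable.of_comap_le le_rfl
  have hYmXY : Measurable[mXY] Y := by
    have h1 : Measurable[mXY] (fun ω => (X ω, Y ω)) := Measurable.of_comap_le le_rfl
    exact measurable_snd.comp h1
  set I : Ω → ℝ := fun ω => if Y ω ≤ y then (1:ℝ) else 0 with hIdef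
  set G : Ω → ℝ := fun ω => gy y (X ω) with hGdef
  set Qi : Ω → ℝ := fun ω => (q (X ω))⁻¹ with hQidef
  set B : Ω → ℝ := μ[A|mX] with hBdef
  have hImXY : Measurable[mXY] I :=
    Measurable.ite (measurableSet_le hYmXY measurable_const) measurable_const measurable_const
  have hGmX : Measurable[mX] G := (hgy y).comp hXmX
  have hQimX : Measurable[mX] Qi := ((hq.comp hXmX)).inv
  -- bounds
  have hQib : ∀ᵐ ω ∂μ, ‖Qi ω‖ ≤ c⁻¹ := by
    filter_upwards [hcq] with ω hω
    have h0 : 0 < q (X ω) := (hq01 (X ω)).1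
    rw [Real.norm_eq_abs, abs_of_nonneg (by positivity)]
    exact inv_anti₀ hc hω
  have hIb : ∀ ω, ‖I ω‖ ≤ 1 := by
    intro ω; rw [hIdef]; dsimp only; split <;> simp
  have hAb : ∀ ω, ‖A ω‖ ≤ 1 := by
    intro ω; rcases hA01 ω with h | h <;> simp [h]
  have hIint : Integrable I μ :=
    (integrable_const (1:ℝ)).mono'
      ((hImXY.mono hmXY le_rfl).stronglyMeasurable.aestronglyMeasurable)
      (Eventually.of_forall hIb)
  have hAint : Integrable A μ :=
    (integrable_const (1:ℝ)).mono' hA.aestronglyMeasurable (Eventually.of_forall hAb)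
  -- condexp bounds
  have hcondI_b : ∀ᵐ ω ∂μ, ‖(μ[I|mX]) ω‖ ≤ 1 := by
    have h1 : 0 ≤ᵐ[μ] μ[I|mX] := condExp_nonneg (Eventually.of_forall fun ω => by
      rw [hIdef]; dsimp only; split <;> norm_num)
    have h2 : μ[I|mX] ≤ᵐ[μ] μ[(fun _ => (1:ℝ))|mX] :=
      condExp_mono hIint (integrable_const 1)
        (Eventually.of_forall fun ω => by rw [hIdef]; dsimp only; split <;> norm_num)
    have h3 : μ[(fun _ => (1:ℝ))|mX] = fun _ => (1:ℝ) := condExp_const hmX (1:ℝ)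
    filter_upwards [h1, h2] with ω h1 h2
    rw [Real.norm_eq_abs, abs_of_nonneg h1]
    calc (μ[I|mX]) ω ≤ (μ[(fun _ => (1:ℝ))|mX]) ω := h2
      _ = 1 := congrFun h3 ω
  have hGb : ∀ᵐ ω ∂μ, ‖G ω‖ ≤ 1 := by
    filter_upwards [hcondI_b, hgyver y] with ω h1 h2
    show ‖gy y (X ω)‖ ≤ 1
    rw [← h2]; exact h1
  have hBb : ∀ᵐ ω ∂μ, ‖B ω‖ ≤ 1 := by
    have h1 : 0 ≤ᵐ[μ] μ[A|mX] := condExp_nonneg (Eventually.of_forall fun ω => by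
      rcases hA01 ω with h | h <;> simp [h])
    have h2 : μ[A|mX] ≤ᵐ[μ] μ[(fun _ => (1:ℝ))|mX] :=
      condExp_mono hAint (integrable_const 1)
        (Eventually.of_forall fun ω => by rcases hA01 ω with h | h <;> simp [h])
    have h3 : μ[(fun _ => (1:ℝ))|mX] = fun _ => (1:ℝ) := condExp_const hmX (1:ℝ)
    filter_upwards [h1, h2] with ω h1 h2
    rw [hBdef, Real.norm_eq_abs, abs_of_nonneg h1]
    calc (μ[A|mX]) ω ≤ (μ[(fun _ => (1:ℝ))|mX]) ω := h2
      _ = 1 := congrFun h3 ω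
  -- ∫ I = F_Y(y)
  have hintI : ∫ ω, I ω ∂μ = (μ {ω | Y ω ≤ y}).toReal := by
    have hs : MeasurableSet[m0] {ω | Y ω ≤ y} := measurableSet_le hY measurable_const
    rw [hIdef]
    simp only []
    rw [show (fun ω => if Y ω ≤ y then (1:ℝ) else 0)
        = Set.indicator {ω | Y ω ≤ y} (fun _ => (1:ℝ)) by
      ext ω; simp [Set.indicator_apply, Set.mem_setOf_eq]]
    simpa [measureReal_def, Pi.one_def] using @integral_indicator_one Ω m0 μ _ hs
  -- ∫ G = ∫ I
  have hintG : ∫ ω, G ω ∂μ = ∫ ω, I ω ∂μ := by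
    calc ∫ ω, G ω ∂μ = ∫ ω, (μ[I|mX]) ω ∂μ := integral_congr_ae (hgyver y).symm
      _ = ∫ ω, I ω ∂μ := integral_condExp hmX
  -- central quantity: ∫ (B·Qi)·G
  -- Step 1: ∫ I·(A·Qi) = ∫ (B·Qi)·G
  have step1 : ∫ ω, (if Y ω ≤ y then A ω / q (X ω) else 0) ∂μ
      = ∫ ω, (B ω * Qi ω) * G ω ∂μ := by
    have e0 : ∫ ω, (if Y ω ≤ y then A ω / q (X ω) else 0) ∂μ
        = ∫ ω, (I ω * Qi ω) * A ω ∂μ := by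
      apply integral_congr_ae; apply Eventually.of_forall; intro ω
      rw [hIdef, hQidef]; dsimp only; split <;> simp [div_eq_mul_inv]; ring
    have hf1 : StronglyMeasurable[mXY] (fun ω => I ω * Qi ω) :=
      (hImXY.mul (hQimX.mono hmXle le_rfl)).stronglyMeasurable
    have hf1b : ∀ᵐ ω ∂μ, ‖I ω * Qi ω‖ ≤ 1 * c⁻¹ := by
      filter_upwards [hQib] with ω h
      rw [norm_mul]
      exact mul_le_mul (hIb ω) h (norm_nonneg _) zero_le_one
    have e1 : ∫ ω, (I ω * Qi ω) * A ω ∂μ = ∫ ω, (I ω * Qi ω) * (μ[A|mXY]) ω ∂μ :=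
      integral_mul_eq_integral_mul_condexp hmXY μ hf1 hf1b hAint
    have e2 : ∫ ω, (I ω * Qi ω) * (μ[A|mXY]) ω ∂μ = ∫ ω, (B ω * Qi ω) * I ω ∂μ := by
      apply integral_congr_ae
      filter_upwards [hMAR] with ω h
      rw [h]; rw [hBdef]; ring
    have hf2 : StronglyMeasurable[mX] (fun ω => B ω * Qi ω) :=
      (stronglyMeasurable_condExp.mul hQimX.stronglyMeasurable)
    have hf2b : ∀ᵐ ω ∂μ, ‖B ω * Qi ω‖ ≤ 1 * c⁻¹ := by
      filter_upwards [hQib, hBb] with ω h hb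
      rw [norm_mul]
      exact mul_le_mul hb h (norm_nonneg _) zero_le_one
    have e3 : ∫ ω, (B ω * Qi ω) * I ω ∂μ = ∫ ω, (B ω * Qi ω) * (μ[I|mX]) ω ∂μ :=
      integral_mul_eq_integral_mul_condexp hmX μ hf2 hf2b hIint
    have e4 : ∫ ω, (B ω * Qi ω) * (μ[I|mX]) ω ∂μ = ∫ ω, (B ω * Qi ω) * G ω ∂μ := by
      apply integral_congr_ae
      filter_upwards [hgyver y] with ω h
      rw [h]
    rw [e0, e1, e2, e3, e4]
  -- Step 2: ∫ (A·Qi − 1)·G = ∫ (B·Qi)·G − ∫ I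
  have step2 : ∫ ω, (A ω / q (X ω) - 1) * gy y (X ω) ∂μ
      = (∫ ω, (B ω * Qi ω) * G ω ∂μ) - ∫ ω, I ω ∂μ := by
    have hf3 : StronglyMeasurable[mXY] (fun ω => G ω * Qi ω) :=
      ((hGmX.mul hQimX).mono hmXle le_rfl).stronglyMeasurable
    have hf3b : ∀ᵐ ω ∂μ, ‖G ω * Qi ω‖ ≤ 1 * c⁻¹ := by
      filter_upwards [hQib, hGb] with ω h hg
      rw [norm_mul]
      exact mul_le_mul hg h (norm_nonneg _) zero_le_one
    have hGQAint : Integrable (fun ω => (G ω * Qi ω) * A ω) μ :=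
      hAint.bdd_mul ((hf3.mono hmXY).aestronglyMeasurable) hf3b
    have hGint : Integrable G μ :=
      (integrable_const (1:ℝ)).mono'
        ((hGmX.mono hmX le_rfl).stronglyMeasurable.aestronglyMeasurable) hGb
    have e0 : ∫ ω, (A ω / q (X ω) - 1) * gy y (X ω) ∂μ
        = (∫ ω, (G ω * Qi ω) * A ω ∂μ) - ∫ ω, G ω ∂μ := by
      rw [← integral_sub hGQAint hGint]
      apply integral_congr_ae; apply Eventually.of_forall; intro ω
      rw [hGdef, hQidef]; dsimp only; rw [div_eq_mul_inv]; ring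
    have e1 : ∫ ω, (G ω * Qi ω) * A ω ∂μ = ∫ ω, (G ω * Qi ω) * (μ[A|mXY]) ω ∂μ :=
      integral_mul_eq_integral_mul_condexp hmXY μ hf3 hf3b hAint
    have e2 : ∫ ω, (G ω * Qi ω) * (μ[A|mXY]) ω ∂μ = ∫ ω, (B ω * Qi ω) * G ω ∂μ := by
      apply integral_congr_ae
      filter_upwards [hMAR] with ω h
      rw [h]; rw [hBdef]; ring
    rw [e0, e1, e2, hintG]
  rw [step1, step2, ← hintI]
  ring
end
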